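/- arXiv:0710.3810 — 9 statements merged into one kernel-verified Lean document; each statement's English description precedes it below -/
import Mathlib

section
/- Let $T(abcd)$ be a tetrahedron of minimum (nonzero) volume among all tetrahedra spanned by a finite point set $S \subset \mathbb{R}^3$. Set coordinates so that $a$ is the origin, $ab$ lies on the $x$-axis with $|ab|=x_0$, triangle $abc$ lies in the $xy$-plane with height $y_0$ from $c$, and let $z_0 = 3v_0/\mathrm{area}(\triangle abc)$ where $v_0$ is the minimum volume. Then the open half-rectangle $R_1 = (0,x_0)\times(-y_0,0]\times\{z_0\}$ contains at most one point $d \in S$ with $\mathrm{vol}(T(abcd)) = v_0$. -/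
/-- Volume of the tetrahedron with vertices `a b c d` in `ℝ³`. -/
noncomputable def tetVol (a b c d : Fin 3 → ℝ) : ℝ :=
  |Matrix.det (Matrix.of ![b - a, c - a, d - a])| / 6

/-- Area of the triangle with vertices `a b c` in `ℝ³`
    (computed as half the norm of the cross product). -/
noncomputable def triArea3 (a b c : Fin 3 → ℝ) : ℝ :=
  Real.sqrt
    (((b - a) 1 * (c - a) 2 - (b - a) 2 * (c - a) 1) ^ 2 +
     ((b - a) 2 * (c - a) 0 - (b - a) 0 * (c - a) 2) ^ 2 +
     ((b - a) 0 * (c - a) 1 - (b - a) 1 * (c - a) 0) ^ 2) / 2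

private lemma tetVol_gen (w u v : Fin 3 → ℝ) :
    tetVol 0 w u v = |w 0 * (u 1 * v 2 - u 2 * v 1) - w 1 * (u 0 * v 2 - u 2 * v 0)
      + w 2 * (u 0 * v 1 - u 1 * v 0)| / 6 := by
  unfold tetVol
  rw [Matrix.det_fin_three]
  simp only [Matrix.of_apply, Matrix.cons_val', Matrix.cons_val_zero, Matrix.cons_val_one,
    Matrix.head_cons, Matrix.cons_val_two, Matrix.tail_cons, Matrix.empty_val',
    Matrix.cons_val_fin_one, Matrix.head_fin_const, Pi.sub_apply, Pi.zero_apply, sub_zero]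
  ring_nf


/-- with coordinates so that `a` is the origin, `b = (x₀,0,0)`,
`c` lies in the `xy`-plane at height `y₀`, and `v₀ > 0` is the minimum nonzero
volume of a tetrahedron spanned by the finite set `S`, the half-open rectangle
`R₁ = (0,x₀) × (-y₀,0] × {z₀}` with `z₀ = 3 v₀ / area(abc)` contains at most one
point `d ∈ S` with `vol(abcd) = v₀`. -/
theorem stmt0 (S : Set (Fin 3 → ℝ)) (hS : S.Finite)
    (a b c : Fin 3 → ℝ) (ha : a ∈ S) (hb : b ∈ S) (hc : c ∈ S)
    (x0 y0 v0 : ℝ) (hx0 : 0 < x0) (hy0 : 0 < y0) (hv0 : 0 < v0)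
    (haO : a = 0) (hbx : b = ![x0, 0, 0])
    (hcz : c 2 = 0) (hcy : |c 1| = y0)
    (hmin : ∀ p q r s : Fin 3 → ℝ, p ∈ S → q ∈ S → r ∈ S → s ∈ S →
      tetVol p q r s ≠ 0 → v0 ≤ tetVol p q r s)
    (z0 : ℝ) (hz0 : z0 = 3 * v0 / triArea3 a b c)
    (d e : Fin 3 → ℝ) (hd : d ∈ S) (he : e ∈ S)
    (hd0 : d 0 ∈ Set.Ioo 0 x0) (hd1 : d 1 ∈ Set.Ioc (-y0) 0) (hd2 : d 2 = z0)
    (he0 : e 0 ∈ Set.Ioo 0 x0) (he1 : e 1 ∈ Set.Ioc (-y0) 0) (he2 : e 2 = z0)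
    (hvd : tetVol a b c d = v0) (hve : tetVol a b c e = v0) :
    d = e := by
  subst haO hbx
  obtain ⟨hd00, hd01⟩ := hd0
  obtain ⟨hd10, hd11⟩ := hd1
  obtain ⟨he00, he01⟩ := he0
  obtain ⟨he10, he11⟩ := he1
  have harea : triArea3 0 (![x0,0,0]) c = x0 * y0 / 2 := by
    unfold triArea3
    simp only [Pi.sub_apply, Pi.zero_apply, sub_zero, Matrix.cons_val_zero, Matrix.cons_val_one,
      Matrix.head_cons, Matrix.cons_val_two, Matrix.tail_cons, hcz]
    rw [show ((0:ℝ)*0 - 0 * c 1)^2 + (0*(c 0) - x0*0)^2 + (x0 * c 1 - 0 * c 0)^2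
        = (x0 * c 1)^2 by ring]
    rw [Real.sqrt_sq_eq_abs, abs_mul, abs_of_pos hx0, hcy]
  have hz0v : x0 * y0 * z0 = 6 * v0 := by
    rw [hz0, harea]
    field_simp
    ring
  have hz0pos : 0 < z0 := by
    have hxy : 0 < x0 * y0 := mul_pos hx0 hy0
    nlinarith
  by_contra hne
  by_cases h1 : d 1 = e 1
  · -- use tetrahedron a c d e
    have h0 : d 0 ≠ e 0 := by
      intro h
      exact hne (funext fun i => by fin_cases i <;> simp [h, h1, hd2, he2])
    have hvol : tetVol 0 c d e = y0 * z0 * |d 0 - e 0| / 6 := by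
      rw [tetVol_gen, hd2, he2, hcz, h1]
      rw [show c 0 * (e 1 * z0 - z0 * e 1) - c 1 * (d 0 * z0 - z0 * e 0)
          + 0 * (d 0 * e 1 - e 1 * e 0) = (c 1) * (z0 * (e 0 - d 0)) by ring,
        abs_mul, hcy, abs_mul, abs_of_pos hz0pos, abs_sub_comm]
      ring
    have hne0 : tetVol 0 c d e ≠ 0 := by
      rw [hvol]
      have : 0 < |d 0 - e 0| := abs_pos.mpr (sub_ne_zero.mpr h0)
      positivity
    have hle := hmin 0 c d e ha hc hd he hne0
    have hlt : |d 0 - e 0| < x0 := abs_lt.mpr ⟨by linarith, by linarith⟩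
    rw [hvol] at hle
    nlinarith [mul_pos hy0 hz0pos]
  · -- use tetrahedron a b d e
    have hvol : tetVol 0 (![x0,0,0]) d e = x0 * z0 * |d 1 - e 1| / 6 := by
      rw [tetVol_gen]
      simp only [Matrix.cons_val_zero, Matrix.cons_val_one, Matrix.head_cons,
        Matrix.cons_val_two, Matrix.tail_cons, hd2, he2]
      rw [show x0 * (d 1 * z0 - z0 * e 1) - 0 * (d 0 * z0 - z0 * e 0)
          + 0 * (d 0 * e 1 - d 1 * e 0) = (x0 * z0) * (d 1 - e 1) by ring,
        abs_mul, abs_of_pos (mul_pos hx0 hz0pos)]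
    have hne0 : tetVol 0 (![x0,0,0]) d e ≠ 0 := by
      rw [hvol]
      have : 0 < |d 1 - e 1| := abs_pos.mpr (sub_ne_zero.mpr h1)
      positivity
    have hle := hmin 0 (![x0,0,0]) d e ha hb hd he hne0
    have hlt : |d 1 - e 1| < y0 := abs_lt.mpr ⟨by linarith, by linarith⟩
    rw [hvol] at hle
    nlinarith [mul_pos hx0 hz0pos]
end

section
/- The number of tetrahedra of minimum (nonzero) volume spanned by any set of $n$ points in $\mathbb{R}^3$ is at most $4\binom{n}{3}$. -/
open Matrix

theorem rel_of_subset_triple {α : Type*} [DecidableEq α] {p : α → α → α → Prop}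
    (h12 : ∀ {a b c}, p a b c → p b a c) (h23 : ∀ {a b c}, p a b c → p a c b)
    {a b c x y z : α} (hxy : x ≠ y) (hxz : x ≠ z) (hyz : y ≠ z)
    (h : ({x, y, z} : Finset α) ⊆ {a, b, c}) (hp : p a b c) : p x y z := by
  simp only [Finset.insert_subset_iff, Finset.singleton_subset_iff, Finset.mem_insert,
    Finset.mem_singleton] at h
  obtain ⟨hx | hx | hx, hy | hy | hy, hz | hz | hz⟩ := h <;> subst hx hy hz <;>
    first
      | exact hp | exact h12 hp | exact h23 hp | exact h12 (h23 hp) | exact h23 (h12 hp)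
      | exact h12 (h23 (h12 hp)) | contradiction

theorem Finset.card_le_two_of_abs_lt_of_le_abs_sub {B : Finset ℝ} {E : ℝ}
    (hlt : ∀ b ∈ B, |b| < E) (hsep : ∀ b ∈ B, ∀ c ∈ B, b ≠ c → E ≤ |b - c|) : B.card ≤ 2 := by
  by_contra! hB
  obtain ⟨a, ha, b, hb, c, hc, hab, hac, hbc⟩ := Finset.two_lt_card.mp hB
  obtain ⟨ha₁, ha₂⟩ := abs_lt.mp (hlt a ha)
  obtain ⟨hb₁, hb₂⟩ := abs_lt.mp (hlt b hb)
  obtain ⟨hc₁, hc₂⟩ := abs_lt.mp (hlt c hc)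
  rcases le_abs'.mp (hsep a ha b hb hab) with h | h <;>
    rcases le_abs'.mp (hsep a ha c hc hac) with h' | h' <;>
    rcases le_abs'.mp (hsep b hb c hc hbc) with h'' | h'' <;> linarith

theorem dotProduct_self_pos {w : Fin 3 → ℝ} (hw : w ≠ 0) : 0 < w ⬝ᵥ w := by
  simpa using dotProduct_self_star_pos_iff.mpr hw

def crossSq (u v : Fin 3 → ℝ) : ℝ := u ⨯₃ v ⬝ᵥ u ⨯₃ v

theorem crossSq_nonneg (u v : Fin 3 → ℝ) : 0 ≤ crossSq u v := by
  simpa [crossSq] using dotProduct_self_star_nonneg (u ⨯₃ v)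

section Coordinates

variable (u v : Fin 3 → ℝ)

-- The coordinates of `z` in the basis `u, v, u ⨯₃ v`, each multiplied by `crossSq u v`.

def coordU (z : Fin 3 → ℝ) : ℝ := z ⬝ᵥ v ⨯₃ (u ⨯₃ v)

def coordV (z : Fin 3 → ℝ) : ℝ := u ⬝ᵥ z ⨯₃ (u ⨯₃ v)

def coordN (z : Fin 3 → ℝ) : ℝ := u ⬝ᵥ v ⨯₃ z

/- The in-plane coordinates of `z`, after reflecting it through the origin when `coordN u v z < 0`,
multiplied by `|coordN u v z|`. -/

def signedU (z : Fin 3 → ℝ) : ℝ := coordU u v z * coordN u v z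

def signedV (z : Fin 3 → ℝ) : ℝ := coordV u v z * coordN u v z

variable {u v} (z z' : Fin 3 → ℝ)

theorem coordU_smul_add_coordV_smul_add_coordN_smul :
    coordU u v z • u + coordV u v z • v + coordN u v z • (u ⨯₃ v) = crossSq u v • z := by
  ext i; fin_cases i <;>
    simp [coordU, coordV, coordN, crossSq, cross_apply, dotProduct, Fin.sum_univ_three] <;> ring

theorem crossSq_mul_crossSq_left :
    crossSq u v * crossSq u z = coordV u v z ^ 2 + coordN u v z ^ 2 * (u ⬝ᵥ u) := by
  simp [coordV, coordN, crossSq, cross_apply, dotProduct, Fin.sum_univ_three]; ring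

theorem crossSq_mul_crossSq_right :
    crossSq u v * crossSq v z = coordU u v z ^ 2 + coordN u v z ^ 2 * (v ⬝ᵥ v) := by
  simp [coordU, coordN, crossSq, cross_apply, dotProduct, Fin.sum_univ_three]; ring

theorem crossSq_mul_crossSq_sub : crossSq u v * crossSq (v - u) (z - u) =
    (coordU u v z + coordV u v z - crossSq u v) ^ 2 + coordN u v z ^ 2 * ((v - u) ⬝ᵥ (v - u)) := by
  simp [coordU, coordV, coordN, crossSq, cross_apply, dotProduct, Fin.sum_univ_three]; ring

theorem crossSq_mul_triple_left :
    crossSq u v * (u ⬝ᵥ z ⨯₃ z') = coordV u v z * coordN u v z' - coordV u v z' * coordN u v z := by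
  simp [coordV, coordN, crossSq, cross_apply, dotProduct, Fin.sum_univ_three]; ring

theorem crossSq_mul_triple_right :
    crossSq u v * (v ⬝ᵥ z ⨯₃ z') = coordU u v z' * coordN u v z - coordU u v z * coordN u v z' := by
  simp [coordU, coordN, crossSq, cross_apply, dotProduct, Fin.sum_univ_three]; ring

variable {z z'}

theorem crossSq_pos (hz : coordN u v z ≠ 0) : 0 < crossSq u v := by
  refine dotProduct_self_pos fun h => hz ?_
  rw [coordN, triple_product_permutation, triple_product_permutation, h, dotProduct_zero]

theorem abs_coordV_lt (hz : coordN u v z ≠ 0) (h : crossSq u z ≤ crossSq u v) :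
    |coordV u v z| < crossSq u v := by
  have hD := crossSq_pos hz
  have hu := dotProduct_self_pos (show u ≠ 0 by rintro rfl; simp [coordN] at hz)
  have hN : 0 < coordN u v z ^ 2 * (u ⬝ᵥ u) := by positivity
  refine abs_lt_of_sq_lt_sq ?_ hD.le
  nlinarith [crossSq_mul_crossSq_left (u := u) (v := v) z, mul_le_mul_of_nonneg_left h hD.le]

theorem abs_coordU_lt (hz : coordN u v z ≠ 0) (h : crossSq v z ≤ crossSq u v) :
    |coordU u v z| < crossSq u v := by
  have hD := crossSq_pos hz
  have hv := dotProduct_self_pos (show v ≠ 0 by rintro rfl; simp [coordN] at hz)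
  have hN : 0 < coordN u v z ^ 2 * (v ⬝ᵥ v) := by positivity
  refine abs_lt_of_sq_lt_sq ?_ hD.le
  nlinarith [crossSq_mul_crossSq_right (u := u) (v := v) z, mul_le_mul_of_nonneg_left h hD.le]

theorem coordU_add_coordV_pos (hz : coordN u v z ≠ 0) (h : crossSq (v - u) (z - u) ≤ crossSq u v) :
    0 < coordU u v z + coordV u v z := by
  have hD := crossSq_pos hz
  have hvu := dotProduct_self_pos
    (show v - u ≠ 0 by intro h0; rw [sub_eq_zero.mp h0, coordN, dot_self_cross] at hz; exact hz rfl)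
  have hN : 0 < coordN u v z ^ 2 * ((v - u) ⬝ᵥ (v - u)) := by positivity
  nlinarith [crossSq_mul_crossSq_sub (u := u) (v := v) z, mul_le_mul_of_nonneg_left h hD.le]

theorem abs_signedU_sub (h : |coordN u v z| = |coordN u v z'|) :
    |signedU u v z - signedU u v z'| = crossSq u v * |v ⬝ᵥ z ⨯₃ z'| := by
  rw [← abs_of_nonneg (crossSq_nonneg u v), ← abs_mul, crossSq_mul_triple_right, abs_eq_abs]
  rcases abs_eq_abs.mp h with h | h <;> rw [signedU, signedU, h] <;> [right; left] <;> ring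

theorem abs_signedV_sub (h : |coordN u v z| = |coordN u v z'|) :
    |signedV u v z - signedV u v z'| = crossSq u v * |u ⬝ᵥ z ⨯₃ z'| := by
  rw [← abs_of_nonneg (crossSq_nonneg u v), ← abs_mul, crossSq_mul_triple_left, abs_eq_abs]
  rcases abs_eq_abs.mp h with h | h <;> rw [signedV, signedV, h] <;> [left; right] <;> ring

theorem eq_of_signedU_eq_of_signedV_eq (hz : coordN u v z ≠ 0)
    (h : |coordN u v z| = |coordN u v z'|) (hpos : 0 < coordU u v z + coordV u v z)
    (hpos' : 0 < coordU u v z' + coordV u v z')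
    (hU : signedU u v z = signedU u v z') (hV : signedV u v z = signedV u v z') : z = z' := by
  rcases abs_eq_abs.mp h with h | h
  · rw [signedU, signedU, h] at hU
    rw [signedV, signedV, h] at hV
    rw [h] at hz
    have hU := mul_right_cancel₀ hz hU
    have hV := mul_right_cancel₀ hz hV
    refine smul_right_injective _ (crossSq_pos (h ▸ hz)).ne' ?_
    simp only [← coordU_smul_add_coordV_smul_add_coordN_smul, hU, hV, h]
  · have h0 :
        (coordU u v z + coordV u v z + (coordU u v z' + coordV u v z')) * coordN u v z' = 0 := by
      simp only [signedU, signedV, h] at hU hV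
      linear_combination -hU - hV
    rcases mul_eq_zero.mp h0 with h0 | h0
    · linarith
    · exact (hz (by rw [h, h0, neg_zero])).elim

end Coordinates

theorem tetVol_eq_abs_triple (a b c d : Fin 3 → ℝ) :
    tetVol a b c d = |(b - a) ⬝ᵥ (c - a) ⨯₃ (d - a)| / 6 := by
  rw [tetVol, triple_product_eq_det]; rfl

theorem tetVol_swap12 (a b c d : Fin 3 → ℝ) : tetVol b a c d = tetVol a b c d := by
  simp only [tetVol_eq_abs_triple]
  rw [← abs_neg]
  congr 2
  simp [cross_apply, dotProduct, Fin.sum_univ_three]; ring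

theorem tetVol_swap23 (a b c d : Fin 3 → ℝ) : tetVol a c b d = tetVol a b c d := by
  simp only [tetVol_eq_abs_triple]
  rw [← abs_neg]
  congr 2
  simp [cross_apply, dotProduct, Fin.sum_univ_three]; ring

theorem tetVol_swap34 (a b c d : Fin 3 → ℝ) : tetVol a b d c = tetVol a b c d := by
  simp only [tetVol_eq_abs_triple]
  rw [← abs_neg]
  congr 2
  simp [cross_apply, dotProduct, Fin.sum_univ_three]; ring

-- Four times the squared area of the triangle `a b c`.
def faceAreaSq (a b c : Fin 3 → ℝ) : ℝ := crossSq (b - a) (c - a)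

theorem faceAreaSq_swap12 (a b c : Fin 3 → ℝ) : faceAreaSq b a c = faceAreaSq a b c := by
  simp [faceAreaSq, crossSq, cross_apply, dotProduct, Fin.sum_univ_three]; ring

theorem faceAreaSq_swap23 (a b c : Fin 3 → ℝ) : faceAreaSq a c b = faceAreaSq a b c := by
  simp [faceAreaSq, crossSq, cross_apply, dotProduct, Fin.sum_univ_three]; ring

theorem faceAreaSq_rotate (a b c : Fin 3 → ℝ) : faceAreaSq b c a = faceAreaSq a b c := by
  rw [← faceAreaSq_swap12 a b c, ← faceAreaSq_swap23 b a c]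

def IsMaxFaceApex (v0 : ℝ) (P Q R s : Fin 3 → ℝ) : Prop :=
  tetVol P Q R s = v0 ∧ faceAreaSq P Q s ≤ faceAreaSq P Q R ∧
    faceAreaSq P R s ≤ faceAreaSq P Q R ∧ faceAreaSq Q R s ≤ faceAreaSq P Q R

namespace IsMaxFaceApex

variable {v0 : ℝ} {P Q R s s' : Fin 3 → ℝ}

theorem swap12 (h : IsMaxFaceApex v0 P Q R s) : IsMaxFaceApex v0 Q P R s := by
  obtain ⟨hvol, hPQ, hPR, hQR⟩ := h
  rw [IsMaxFaceApex, tetVol_swap12, faceAreaSq_swap12 P Q s, faceAreaSq_swap12 P Q R]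
  exact ⟨hvol, hPQ, hQR, hPR⟩

theorem swap23 (h : IsMaxFaceApex v0 P Q R s) : IsMaxFaceApex v0 P R Q s := by
  obtain ⟨hvol, hPQ, hPR, hQR⟩ := h
  rw [IsMaxFaceApex, tetVol_swap23, faceAreaSq_swap23 P Q R, faceAreaSq_swap12 Q R s]
  exact ⟨hvol, hPR, hPQ, hQR⟩

theorem abs_coordN (h : IsMaxFaceApex v0 P Q R s) :
    |coordN (Q - P) (R - P) (s - P)| = 6 * v0 := by
  have := h.1
  rw [tetVol_eq_abs_triple] at this
  rw [coordN]; linarith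

theorem coordN_ne_zero (hv0 : 0 < v0) (h : IsMaxFaceApex v0 P Q R s) :
    coordN (Q - P) (R - P) (s - P) ≠ 0 :=
  abs_pos.mp (h.abs_coordN ▸ by positivity)

theorem abs_signedU_lt (hv0 : 0 < v0) (h : IsMaxFaceApex v0 P Q R s) :
    |signedU (Q - P) (R - P) (s - P)| < crossSq (Q - P) (R - P) * (6 * v0) := by
  rw [signedU, abs_mul, h.abs_coordN]
  exact mul_lt_mul_of_pos_right (abs_coordU_lt (h.coordN_ne_zero hv0) h.2.2.1) (by positivity)

theorem abs_signedV_lt (hv0 : 0 < v0) (h : IsMaxFaceApex v0 P Q R s) :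
    |signedV (Q - P) (R - P) (s - P)| < crossSq (Q - P) (R - P) * (6 * v0) := by
  rw [signedV, abs_mul, h.abs_coordN]
  exact mul_lt_mul_of_pos_right (abs_coordV_lt (h.coordN_ne_zero hv0) h.2.1) (by positivity)

theorem coordU_add_coordV_pos (hv0 : 0 < v0) (h : IsMaxFaceApex v0 P Q R s) :
    0 < coordU (Q - P) (R - P) (s - P) + coordV (Q - P) (R - P) (s - P) := by
  refine _root_.coordU_add_coordV_pos (h.coordN_ne_zero hv0) ?_
  have := h.2.2.2
  rwa [faceAreaSq, faceAreaSq, ← sub_sub_sub_cancel_right R Q P, ← sub_sub_sub_cancel_right s Q P]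
    at this

theorem le_abs_signedU_sub (h : IsMaxFaceApex v0 P Q R s) (h' : IsMaxFaceApex v0 P Q R s')
    (hvol : tetVol P R s s' ≠ 0 → v0 ≤ tetVol P R s s')
    (hne : signedU (Q - P) (R - P) (s - P) ≠ signedU (Q - P) (R - P) (s' - P)) :
    crossSq (Q - P) (R - P) * (6 * v0) ≤
      |signedU (Q - P) (R - P) (s - P) - signedU (Q - P) (R - P) (s' - P)| := by
  have hsub := abs_signedU_sub (h.abs_coordN.trans h'.abs_coordN.symm)
  rw [show |(R - P) ⬝ᵥ (s - P) ⨯₃ (s' - P)| = 6 * tetVol P R s s' by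
    rw [tetVol_eq_abs_triple]; ring] at hsub
  have hvol0 : tetVol P R s s' ≠ 0 := by
    intro h0
    rw [h0, mul_zero, mul_zero, abs_eq_zero, sub_eq_zero] at hsub
    exact hne hsub
  rw [hsub]
  exact mul_le_mul_of_nonneg_left (by linarith [hvol hvol0]) (crossSq_nonneg _ _)

theorem le_abs_signedV_sub (h : IsMaxFaceApex v0 P Q R s) (h' : IsMaxFaceApex v0 P Q R s')
    (hvol : tetVol P Q s s' ≠ 0 → v0 ≤ tetVol P Q s s')
    (hne : signedV (Q - P) (R - P) (s - P) ≠ signedV (Q - P) (R - P) (s' - P)) :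
    crossSq (Q - P) (R - P) * (6 * v0) ≤
      |signedV (Q - P) (R - P) (s - P) - signedV (Q - P) (R - P) (s' - P)| := by
  have hsub := abs_signedV_sub (h.abs_coordN.trans h'.abs_coordN.symm)
  rw [show |(Q - P) ⬝ᵥ (s - P) ⨯₃ (s' - P)| = 6 * tetVol P Q s s' by
    rw [tetVol_eq_abs_triple]; ring] at hsub
  have hvol0 : tetVol P Q s s' ≠ 0 := by
    intro h0
    rw [h0, mul_zero, mul_zero, abs_eq_zero, sub_eq_zero] at hsub
    exact hne hsub
  rw [hsub]
  exact mul_le_mul_of_nonneg_left (by linarith [hvol hvol0]) (crossSq_nonneg _ _)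

theorem eq_of_signed_eq (hv0 : 0 < v0) (h : IsMaxFaceApex v0 P Q R s)
    (h' : IsMaxFaceApex v0 P Q R s')
    (hU : signedU (Q - P) (R - P) (s - P) = signedU (Q - P) (R - P) (s' - P))
    (hV : signedV (Q - P) (R - P) (s - P) = signedV (Q - P) (R - P) (s' - P)) : s = s' :=
  sub_left_injective <| eq_of_signedU_eq_of_signedV_eq (h.coordN_ne_zero hv0)
    (h.abs_coordN.trans h'.abs_coordN.symm) (h.coordU_add_coordV_pos hv0)
    (h'.coordU_add_coordV_pos hv0) hU hV

end IsMaxFaceApex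

theorem card_le_four_of_isMaxFaceApex {v0 : ℝ} {P Q R : Fin 3 → ℝ} {S A : Finset (Fin 3 → ℝ)}
    (hv0 : 0 < v0)
    (hmin : ∀ p q r s : Fin 3 → ℝ, p ∈ S → q ∈ S → r ∈ S → s ∈ S →
      tetVol p q r s ≠ 0 → v0 ≤ tetVol p q r s)
    (hP : P ∈ S) (hQ : Q ∈ S) (hR : R ∈ S) (hAS : A ⊆ S)
    (hA : ∀ s ∈ A, IsMaxFaceApex v0 P Q R s) : A.card ≤ 4 := by
  set X := fun s => signedU (Q - P) (R - P) (s - P)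
  set Y := fun s => signedV (Q - P) (R - P) (s - P)
  have hX : (A.image X).card ≤ 2 := by
    refine Finset.card_le_two_of_abs_lt_of_le_abs_sub (Finset.forall_mem_image.mpr
      fun s hs => (hA s hs).abs_signedU_lt hv0) (Finset.forall_mem_image.mpr fun s hs =>
        Finset.forall_mem_image.mpr fun s' hs' => (hA s hs).le_abs_signedU_sub (hA s' hs')
          (hmin P R s s' hP hR (hAS hs) (hAS hs')))
  have hY : (A.image Y).card ≤ 2 := by
    refine Finset.card_le_two_of_abs_lt_of_le_abs_sub (Finset.forall_mem_image.mpr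
      fun s hs => (hA s hs).abs_signedV_lt hv0) (Finset.forall_mem_image.mpr fun s hs =>
        Finset.forall_mem_image.mpr fun s' hs' => (hA s hs).le_abs_signedV_sub (hA s' hs')
          (hmin P Q s s' hP hQ (hAS hs) (hAS hs')))
  have hinj : Set.InjOn (fun s => (X s, Y s)) A := fun s hs s' hs' h =>
    (hA s hs).eq_of_signed_eq hv0 (hA s' hs') (Prod.ext_iff.mp h).1 (Prod.ext_iff.mp h).2
  calc A.card ≤ (A.image X ×ˢ A.image Y).card :=
        Finset.card_le_card_of_injOn _ (fun s hs => Finset.mem_product.mpr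
          ⟨Finset.mem_image_of_mem _ hs, Finset.mem_image_of_mem _ hs⟩) hinj
    _ = (A.image X).card * (A.image Y).card := Finset.card_product _ _
    _ ≤ 2 * 2 := Nat.mul_le_mul hX hY

theorem exists_isMaxFaceApex {v0 : ℝ} {p q r s : Fin 3 → ℝ} (hvol : tetVol p q r s = v0) :
    ∃ P Q R s', insert s' ({P, Q, R} : Finset (Fin 3 → ℝ)) = {p, q, r, s} ∧
      IsMaxFaceApex v0 P Q R s' := by
  obtain ⟨m, hmax, hle⟩ := Finset.exists_max_image
    {faceAreaSq p q r, faceAreaSq p q s, faceAreaSq p r s, faceAreaSq q r s} id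
    ⟨_, Finset.mem_insert_self _ _⟩
  simp only [id, Finset.mem_insert, Finset.mem_singleton, forall_eq_or_imp, forall_eq]
    at hmax hle
  obtain ⟨hpqr, hpqs, hprs, hqrs⟩ := hle
  rcases hmax with rfl | rfl | rfl | rfl
  · exact ⟨p, q, r, s, by ext; simp only [Finset.mem_insert, Finset.mem_singleton]; tauto,
      hvol, hpqs, hprs, hqrs⟩
  · refine ⟨p, q, s, r, by ext; simp only [Finset.mem_insert, Finset.mem_singleton]; tauto,
      by rwa [tetVol_swap34], hpqr, ?_, ?_⟩
    · rwa [faceAreaSq_swap23]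
    · rwa [faceAreaSq_swap23]
  · refine ⟨p, r, s, q, by ext; simp only [Finset.mem_insert, Finset.mem_singleton]; tauto,
      by rwa [tetVol_swap34, tetVol_swap23], ?_, ?_, ?_⟩
    · rwa [faceAreaSq_swap23]
    · rwa [faceAreaSq_swap23]
    · rwa [faceAreaSq_rotate]
  · refine ⟨q, r, s, p, rfl,
      by rwa [tetVol_swap34, tetVol_swap23, tetVol_swap12], ?_, ?_, ?_⟩ <;>
    rwa [faceAreaSq_rotate]

open Classical in
noncomputable def maxFaceApexes (v0 : ℝ) (S t : Finset (Fin 3 → ℝ)) : Finset (Fin 3 → ℝ) :=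
  S.filter fun s => ∃ P Q R, t = {P, Q, R} ∧ IsMaxFaceApex v0 P Q R s

theorem mem_maxFaceApexes {v0 : ℝ} {S t : Finset (Fin 3 → ℝ)} {s : Fin 3 → ℝ} :
    s ∈ maxFaceApexes v0 S t ↔ s ∈ S ∧ ∃ P Q R, t = {P, Q, R} ∧ IsMaxFaceApex v0 P Q R s := by
  classical
  exact Finset.mem_filter

theorem card_maxFaceApexes_le_four {v0 : ℝ} {S t : Finset (Fin 3 → ℝ)} (hv0 : 0 < v0)
    (hmin : ∀ p q r s : Fin 3 → ℝ, p ∈ S → q ∈ S → r ∈ S → s ∈ S →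
      tetVol p q r s ≠ 0 → v0 ≤ tetVol p q r s)
    (ht : t ∈ S.powersetCard 3) : (maxFaceApexes v0 S t).card ≤ 4 := by
  obtain ⟨htS, htc⟩ := Finset.mem_powersetCard.mp ht
  obtain ⟨P, Q, R, hPQ, hPR, hQR, rfl⟩ := Finset.card_eq_three.mp htc
  refine card_le_four_of_isMaxFaceApex (P := P) (Q := Q) (R := R) hv0 hmin (htS (by simp))
    (htS (by simp)) (htS (by simp)) (fun s hs => (mem_maxFaceApexes.mp hs).1) fun s hs => ?_
  obtain ⟨-, P', Q', R', heq, hs⟩ := mem_maxFaceApexes.mp hs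
  exact rel_of_subset_triple (p := fun P Q R => IsMaxFaceApex v0 P Q R s)
    IsMaxFaceApex.swap12 IsMaxFaceApex.swap23 hPQ hPR hQR heq.le hs

noncomputable def chargedTetrahedra (v0 : ℝ) (S : Finset (Fin 3 → ℝ)) :
    Finset (Finset (Fin 3 → ℝ)) :=
  (S.powersetCard 3).biUnion fun t => (maxFaceApexes v0 S t).image (insert · t)

theorem card_chargedTetrahedra_le {v0 : ℝ} {S : Finset (Fin 3 → ℝ)} (hv0 : 0 < v0)
    (hmin : ∀ p q r s : Fin 3 → ℝ, p ∈ S → q ∈ S → r ∈ S → s ∈ S →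
      tetVol p q r s ≠ 0 → v0 ≤ tetVol p q r s) :
    (chargedTetrahedra v0 S).card ≤ 4 * S.card.choose 3 :=
  calc (chargedTetrahedra v0 S).card
      ≤ ∑ t ∈ S.powersetCard 3, ((maxFaceApexes v0 S t).image (insert · t)).card :=
        Finset.card_biUnion_le
    _ ≤ ∑ t ∈ S.powersetCard 3, 4 := Finset.sum_le_sum fun t ht =>
        Finset.card_image_le.trans (card_maxFaceApexes_le_four hv0 hmin ht)
    _ = 4 * S.card.choose 3 := by
        rw [Finset.sum_const, Finset.card_powersetCard, smul_eq_mul, mul_comm]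

theorem mem_chargedTetrahedra {v0 : ℝ} {S : Finset (Fin 3 → ℝ)} {p q r s : Fin 3 → ℝ}
    (hS : {p, q, r, s} ⊆ S) (hcard : ({p, q, r, s} : Finset (Fin 3 → ℝ)).card = 4)
    (hvol : tetVol p q r s = v0) : {p, q, r, s} ∈ chargedTetrahedra v0 S := by
  obtain ⟨P, Q, R, s', heq, hapex⟩ := exists_isMaxFaceApex hvol
  rw [← heq] at hS hcard ⊢
  have ht : ({P, Q, R} : Finset (Fin 3 → ℝ)).card = 3 :=
    le_antisymm Finset.card_le_three (by linarith [Finset.card_insert_le s' {P, Q, R}])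
  refine Finset.mem_biUnion.mpr ⟨{P, Q, R},
    Finset.mem_powersetCard.mpr ⟨(Finset.subset_insert _ _).trans hS, ht⟩, ?_⟩
  exact Finset.mem_image_of_mem _ (mem_maxFaceApexes.mpr
    ⟨hS (Finset.mem_insert_self _ _), P, Q, R, rfl, hapex⟩)

theorem stmt1_general (n : ℕ) (S : Finset (Fin 3 → ℝ)) (hn : S.card = n)
    (v0 : ℝ) (hv0 : 0 < v0)
    (hmin : ∀ p q r s : Fin 3 → ℝ, p ∈ S → q ∈ S → r ∈ S → s ∈ S →
      tetVol p q r s ≠ 0 → v0 ≤ tetVol p q r s) :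
    {T : Finset (Fin 3 → ℝ) | T ⊆ S ∧ ∃ p q r s : Fin 3 → ℝ,
        T = {p, q, r, s} ∧ T.card = 4 ∧ tetVol p q r s = v0}.ncard
      ≤ 4 * n.choose 3 := by
  subst hn
  refine (Set.ncard_le_ncard ?_).trans
    ((Set.ncard_coe_finset (chargedTetrahedra v0 S)).trans_le (card_chargedTetrahedra_le hv0 hmin))
  rintro T ⟨hTS, p, q, r, s, rfl, hcard, hvol⟩
  exact mem_chargedTetrahedra hTS hcard hvol

/-- the number of tetrahedra of minimum (nonzero) volume spanned by
any set of `n` points in `ℝ³` is at most `4 * (n choose 3)`. -/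
theorem stmt1 (n : ℕ) (S : Finset (Fin 3 → ℝ)) (hn : S.card = n)
    (v0 : ℝ) (hv0 : 0 < v0)
    (hmin : ∀ p q r s : Fin 3 → ℝ, p ∈ S → q ∈ S → r ∈ S → s ∈ S →
      tetVol p q r s ≠ 0 → v0 ≤ tetVol p q r s)
    (hattained : ∃ p q r s : Fin 3 → ℝ, p ∈ S ∧ q ∈ S ∧ r ∈ S ∧ s ∈ S ∧
      tetVol p q r s = v0) :
    {T : Finset (Fin 3 → ℝ) | T ⊆ S ∧ ∃ p q r s : Fin 3 → ℝ,
        T = {p, q, r, s} ∧ T.card = 4 ∧ tetVol p q r s = v0}.ncard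
      ≤ 4 * n.choose 3 :=
  stmt1_general n S hn v0 hv0 hmin
end

section
/- For every $n$ divisible by 4, there exists a set of $n$ points in $\mathbb{R}^3$ spanning at least $\frac{3}{16}n^3 - O(n^2)$ tetrahedra of minimum nonzero volume; concretely, at least $12(n/4-1)(n/4)^2$ such tetrahedra. -/
open Finset

lemma tetVol_intCast (A B C D : Fin 3 → ℤ) :
    tetVol (Int.cast ∘ A) (Int.cast ∘ B) (Int.cast ∘ C) (Int.cast ∘ D) =
      |((Matrix.of ![B - A, C - A, D - A]).det : ℝ)| / 6 := by
  rw [tetVol, Int.cast_det]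
  congr 3
  ext i j
  fin_cases i <;> simp

lemma one_div_six_le_tetVol_intCast {A B C D : Fin 3 → ℤ}
    (h : tetVol (Int.cast ∘ A) (Int.cast ∘ B) (Int.cast ∘ C) (Int.cast ∘ D) ≠ 0) :
    1 / 6 ≤ tetVol (Int.cast ∘ A) (Int.cast ∘ B) (Int.cast ∘ C) (Int.cast ∘ D) := by
  rw [tetVol_intCast] at h ⊢
  have hdet : (Matrix.of ![B - A, C - A, D - A]).det ≠ 0 := by
    rintro h0; simp [h0] at h
  have : (1 : ℝ) ≤ |((Matrix.of ![B - A, C - A, D - A]).det : ℝ)| := by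
    exact_mod_cast Int.one_le_abs hdet
  linarith

lemma tetVol_add_single_two (p q r : Fin 3 → ℝ) :
    tetVol p (p + Pi.single 2 1) q r =
      |(q 0 - p 0) * (r 1 - p 1) - (q 1 - p 1) * (r 0 - p 0)| / 6 := by
  rw [tetVol, Matrix.det_fin_three]
  congr 2
  simp

def corner : Fin 4 → ℤ × ℤ := ![(0, 0), (1, 0), (0, 1), (1, 1)]

lemma abs_cross_corner {a b c : Fin 4} (hab : a ≠ b) (hac : a ≠ c) (hbc : b ≠ c) :
    |((corner b).1 - (corner a).1) * ((corner c).2 - (corner a).2) -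
      ((corner b).2 - (corner a).2) * ((corner c).1 - (corner a).1)| = 1 := by
  revert a b c; decide

lemma corner_injective : Function.Injective corner := by decide

def columnPoint (u : Fin 4 × ℕ) : Fin 3 → ℤ := ![(corner u.1).1, (corner u.1).2, u.2]

lemma columnPoint_injective : Function.Injective columnPoint := by
  rintro ⟨a, k⟩ ⟨b, l⟩ h
  have hab : a = b := corner_injective (Prod.ext (congrFun h 0) (congrFun h 1))
  have hkl : k = l := by simpa [columnPoint] using congrFun h 2
  rw [hab, hkl]

lemma intCast_columnPoint_succ (a : Fin 4) (k : ℕ) :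
    Int.cast ∘ columnPoint (a, k + 1) =
      Int.cast ∘ columnPoint (a, k) + (Pi.single 2 1 : Fin 3 → ℝ) := by
  funext i; fin_cases i <;> simp [columnPoint]

lemma tetVol_columnPoint {a b c : Fin 4} (hab : a ≠ b) (hac : a ≠ c) (hbc : b ≠ c)
    (k i j : ℕ) :
    tetVol (Int.cast ∘ columnPoint (a, k)) (Int.cast ∘ columnPoint (a, k + 1))
      (Int.cast ∘ columnPoint (b, i)) (Int.cast ∘ columnPoint (c, j)) = 1 / 6 := by
  rw [intCast_columnPoint_succ, tetVol_add_single_two]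
  simp only [Function.comp_apply, columnPoint, Matrix.cons_val_zero, Matrix.cons_val_one]
  congr 1
  exact_mod_cast abs_cross_corner hab hac hbc

noncomputable def columnConfig (m : ℕ) : Finset (Fin 3 → ℝ) :=
  (univ ×ˢ range m).image fun u => Int.cast ∘ columnPoint u

lemma intCast_comp_columnPoint_injective :
    Function.Injective fun u => (Int.cast ∘ columnPoint u : Fin 3 → ℝ) :=
  (Int.cast_injective.comp_left).comp columnPoint_injective

lemma card_columnConfig (m : ℕ) : (columnConfig m).card = 4 * m := by
  simp [columnConfig, card_image_of_injective _ intCast_comp_columnPoint_injective]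

lemma one_div_six_le_tetVol_of_mem_columnConfig {m : ℕ} {p q r s : Fin 3 → ℝ}
    (hp : p ∈ columnConfig m) (hq : q ∈ columnConfig m) (hr : r ∈ columnConfig m)
    (hs : s ∈ columnConfig m) (h : tetVol p q r s ≠ 0) : 1 / 6 ≤ tetVol p q r s := by
  simp only [columnConfig, mem_image] at hp hq hr hs
  obtain ⟨_, -, rfl⟩ := hp
  obtain ⟨_, -, rfl⟩ := hq
  obtain ⟨_, -, rfl⟩ := hr
  obtain ⟨_, -, rfl⟩ := hs
  exact one_div_six_le_tetVol_intCast h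

def tetrahedraOfVol (S : Finset (Fin 3 → ℝ)) (v : ℝ) : Set (Finset (Fin 3 → ℝ)) :=
  {T | T ⊆ S ∧ ∃ p q r s : Fin 3 → ℝ, T = {p, q, r, s} ∧ T.card = 4 ∧ tetVol p q r s = v}

/-- `((a, b, c), k, i, j)` stands for the tetrahedron with the vertical edge `(a, k)`, `(a, k + 1)`
and the further vertices `(b, i)`, `(c, j)`. -/
abbrev StackIndex := (Fin 4 × Fin 4 × Fin 4) × ℕ × ℕ × ℕ

def stackedTet (w : StackIndex) : Finset (Fin 4 × ℕ) :=
  {(w.1.1, w.2.1), (w.1.1, w.2.1 + 1), (w.1.2.1, w.2.2.1), (w.1.2.2, w.2.2.2)}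

def cornerTriples : Finset (Fin 4 × Fin 4 × Fin 4) :=
  {t | t.2.1 ≠ t.1 ∧ t.2.2 ≠ t.1 ∧ t.2.1 < t.2.2}

lemma card_stackedTet {w : StackIndex} (hw : w.1 ∈ cornerTriples) :
    (stackedTet w).card = 4 := by
  obtain ⟨⟨a, b, c⟩, k, i, j⟩ := w
  obtain ⟨hb, hc, hbc⟩ := (mem_filter.mp hw).2
  rw [stackedTet, card_insert_of_notMem, card_insert_of_notMem, card_pair]
  all_goals simp_all [hbc.ne, eq_comm]

lemma stackedTet_injOn : Set.InjOn stackedTet {w | w.1 ∈ cornerTriples} := by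
  rintro ⟨⟨a, b, c⟩, k, i, j⟩ hw ⟨⟨a', b', c'⟩, k', i', j'⟩ hw' h
  obtain ⟨-, hb, hc, hbc⟩ := mem_filter.mp (show (a, b, c) ∈ cornerTriples from hw)
  obtain ⟨-, hb', hc', hbc'⟩ := mem_filter.mp (show (a', b', c') ∈ cornerTriples from hw')
  dsimp only at hb hc hbc hb' hc' hbc'
  have mem : ∀ x ∈ stackedTet ((a, b, c), k, i, j), x ∈ stackedTet ((a', b', c'), k', i', j') :=
    fun x hx => h ▸ hx
  -- `a` is the only line carrying two vertices, so the memberships pin down every coordinate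
  have m1 := mem (a, k) (by simp [stackedTet])
  have m2 := mem (a, k + 1) (by simp [stackedTet])
  have m3 := mem (b, i) (by simp [stackedTet])
  have m4 := mem (c, j) (by simp [stackedTet])
  simp only [stackedTet, mem_insert, mem_singleton, Prod.mk.injEq] at m1 m2 m3 m4
  simp only [Prod.mk.injEq]
  rcases m1 with ⟨e1, e2⟩ | ⟨e1, e2⟩ | ⟨e1, e2⟩ | ⟨e1, e2⟩ <;>
    rcases m2 with ⟨e3, e4⟩ | ⟨e3, e4⟩ | ⟨e3, e4⟩ | ⟨e3, e4⟩ <;>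
    rcases m3 with ⟨e5, e6⟩ | ⟨e5, e6⟩ | ⟨e5, e6⟩ | ⟨e5, e6⟩ <;>
    rcases m4 with ⟨e7, e8⟩ | ⟨e7, e8⟩ | ⟨e7, e8⟩ | ⟨e7, e8⟩ <;>
    omega

def stackIndices (m : ℕ) : Finset StackIndex :=
  cornerTriples ×ˢ range (m - 1) ×ˢ range m ×ˢ range m

lemma card_stackIndices (m : ℕ) : (stackIndices m).card = 12 * (m - 1) * m ^ 2 := by
  have : cornerTriples.card = 12 := by decide
  simp only [stackIndices, card_product, this, card_range]
  ring

lemma image_stackedTet_mem_tetrahedraOfVol {m : ℕ} {w : StackIndex}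
    (hw : w ∈ stackIndices m) :
    (stackedTet w).image (fun u => Int.cast ∘ columnPoint u) ∈
      tetrahedraOfVol (columnConfig m) (1 / 6) := by
  obtain ⟨⟨a, b, c⟩, k, i, j⟩ := w
  simp only [stackIndices, mem_product, mem_range] at hw
  obtain ⟨htriple, hk, hi, hj⟩ := hw
  obtain ⟨hb, hc, hbc⟩ := (mem_filter.mp htriple).2
  refine ⟨image_subset_image ?_, _, _, _, _, by simp [stackedTet, image_insert], ?_,
    tetVol_columnPoint (Ne.symm hb) (Ne.symm hc) hbc.ne k i j⟩
  · intro u hu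
    simp only [stackedTet, mem_insert, mem_singleton] at hu
    rcases hu with rfl | rfl | rfl | rfl <;> simp <;> omega
  · rw [card_image_of_injective _ intCast_comp_columnPoint_injective]
    exact card_stackedTet htriple

lemma le_ncard_tetrahedraOfVol_columnConfig (m : ℕ) :
    12 * (m - 1) * m ^ 2 ≤ (tetrahedraOfVol (columnConfig m) (1 / 6)).ncard := by
  have hfin : (tetrahedraOfVol (columnConfig m) (1 / 6)).Finite :=
    (columnConfig m).powerset.finite_toSet.subset fun T hT => mem_powerset.mpr hT.1
  have hinj : Set.InjOn (fun w => (stackedTet w).image fun u => Int.cast ∘ columnPoint u)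
      (stackIndices m) := fun w hw w' hw' h =>
    stackedTet_injOn (by simp_all [stackIndices]) (by simp_all [stackIndices])
      (image_injective intCast_comp_columnPoint_injective h)
  rw [← card_stackIndices, ← card_image_of_injOn hinj, ← Set.ncard_coe_finset]
  refine Set.ncard_le_ncard ?_ hfin
  rw [coe_image]
  rintro _ ⟨w, hw, rfl⟩
  exact image_stackedTet_mem_tetrahedraOfVol hw

/-- for every `n` divisible by 4 there is a set of `n` points in
`ℝ³` spanning at least `12 * (n/4 - 1) * (n/4)^2` tetrahedra of minimum nonzero
volume. -/
theorem stmt2 (n : ℕ) (hn4 : 4 ∣ n) :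
    ∃ S : Finset (Fin 3 → ℝ), S.card = n ∧
      ∃ v0 : ℝ, 0 < v0 ∧
        (∀ p q r s : Fin 3 → ℝ, p ∈ S → q ∈ S → r ∈ S → s ∈ S →
          tetVol p q r s ≠ 0 → v0 ≤ tetVol p q r s) ∧
        12 * (n / 4 - 1) * (n / 4) ^ 2 ≤
          {T : Finset (Fin 3 → ℝ) | T ⊆ S ∧ ∃ p q r s : Fin 3 → ℝ,
            T = {p, q, r, s} ∧ T.card = 4 ∧ tetVol p q r s = v0}.ncard := by
  obtain ⟨m, rfl⟩ := hn4
  rw [Nat.mul_div_cancel_left m four_pos]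
  exact ⟨columnConfig m, card_columnConfig m, 1 / 6, by norm_num,
    fun _ _ _ _ => one_div_six_le_tetVol_of_mem_columnConfig,
    le_ncard_tetrahedraOfVol_columnConfig m⟩
end

section
/- For every $k \geq 1$ and $n$ divisible by $k$, there is a set of $n$ points in $\mathbb{R}^k$ (hence in $\mathbb{R}^d$ for any $d \geq k$) that spans at least $k(n/k - 1)(n/k)^{k-1}$ $k$-dimensional simplices of minimum nonzero $k$-volume. -/
/-!
The configuration consists of the points `(j, i)`, `i < m`, on the lines `j : Fin k`, where line
`0` is the first coordinate axis and line `j ≠ 0` is its translate by `e_j`. These are lattice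
points, so every nondegenerate simplex spanned by them has `|det| ≥ 1`, i.e. volume `≥ 1/k!`.
A simplex with the consecutive vertices `(j₀, i)`, `(j₀, i + 1)` and one vertex on every other
line has determinant `1`: the difference of the two rows on line `j₀` is `e₀`, and the remaining
rows form a unitriangular matrix. These simplices are determined by their vertex sets, and there
are `k (m - 1) m^(k - 1)` of them.
-/

/-- The `k`-volume of the `k`-simplex with vertices `p 0, …, p k` in `ℝᵏ`. -/
noncomputable def simplexVol (k : ℕ) (p : Fin (k + 1) → (Fin k → ℝ)) : ℝ :=
  |Matrix.det (Matrix.of fun i : Fin k => p i.succ - p 0)| / (Nat.factorial k)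

open Finset
open scoped Nat

lemma one_le_abs_det_of_forall_eq_intCast {n : Type*} [Fintype n] [DecidableEq n]
    {A : Matrix n n ℝ} (hA : ∀ i j, ∃ z : ℤ, A i j = z) (h : A.det ≠ 0) : 1 ≤ |A.det| := by
  choose Z hZ using hA
  have hdet : A.det = ((Matrix.of Z).det : ℝ) := by
    rw [Int.cast_det]
    congr 1
    ext i j
    exact hZ i j
  rw [hdet] at h ⊢
  exact_mod_cast Int.one_le_abs (by exact_mod_cast h)

lemma det_ne_zero_of_simplexVol_ne_zero {k : ℕ} {p : Fin (k + 1) → Fin k → ℝ}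
    (h : simplexVol k p ≠ 0) : (Matrix.of fun i : Fin k => p i.succ - p 0).det ≠ 0 := by
  intro h0
  simp [simplexVol, h0] at h

lemma one_div_factorial_le_simplexVol {k : ℕ} {p : Fin (k + 1) → Fin k → ℝ}
    (hp : ∀ i x, ∃ z : ℤ, p i x = z) (h : simplexVol k p ≠ 0) :
    1 / (k ! : ℝ) ≤ simplexVol k p := by
  have hint : ∀ i x, ∃ z : ℤ, (Matrix.of fun i : Fin k => p i.succ - p 0) i x = z := by
    intro i x
    obtain ⟨a, ha⟩ := hp i.succ x
    obtain ⟨b, hb⟩ := hp 0 x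
    exact ⟨a - b, by simp [ha, hb]⟩
  have hdet := det_ne_zero_of_simplexVol_ne_zero h
  unfold simplexVol
  gcongr
  exact one_le_abs_det_of_forall_eq_intCast hint hdet

lemma injective_of_simplexVol_ne_zero {k : ℕ} {p : Fin (k + 1) → Fin k → ℝ}
    (h : simplexVol k p ≠ 0) : Function.Injective p := by
  have hdet := det_ne_zero_of_simplexVol_ne_zero h
  have hsucc : ∀ i : Fin k, p i.succ ≠ p 0 := fun i hi =>
    hdet (Matrix.det_eq_zero_of_row_eq_zero i fun x => by simp [hi])
  intro a b hab
  cases a using Fin.cases with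
  | zero =>
    cases b using Fin.cases with
    | zero => rfl
    | succ b => exact absurd hab.symm (hsucc b)
  | succ a =>
    cases b using Fin.cases with
    | zero => exact absurd hab (hsucc a)
    | succ b =>
      by_contra hne
      have hab' : a ≠ b := fun h => hne (congrArg Fin.succ h)
      exact hdet (Matrix.det_zero_of_row_eq hab' (by ext x; simp [hab]))

lemma eq_of_insert_setOf_graph_eq {α : Type*} {j₀ j₁ : α} {g h : α → ℕ}
    (H : insert (j₀, g j₀ + 1) {q : α × ℕ | q.2 = g q.1} =
      insert (j₁, h j₁ + 1) {q : α × ℕ | q.2 = h q.1}) : j₀ = j₁ ∧ g = h := by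
  have H' : ∀ j i, (j = j₀ ∧ i = g j₀ + 1 ∨ i = g j) ↔ (j = j₁ ∧ i = h j₁ + 1 ∨ i = h j) := by
    intro j i
    simpa using Set.ext_iff.mp H (j, i)
  have hj : j₀ = j₁ := by
    by_contra hne
    have h1 := (H' j₀ (g j₀)).1 (Or.inr rfl)
    have h2 := (H' j₀ (g j₀ + 1)).1 (Or.inl ⟨rfl, rfl⟩)
    simp only [hne, false_and, false_or] at h1 h2
    omega
  subst hj
  refine ⟨rfl, funext fun j => ?_⟩
  have h1 := (H' j (g j)).1 (Or.inr rfl)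
  have h2 := (H' j (h j)).2 (Or.inr rfl)
  rcases h1 with ⟨rfl, h1⟩ | h1 <;> rcases h2 with ⟨-, h2⟩ | h2 <;> omega

namespace ParallelLines

variable {k : ℕ}

/-- `⟨j₀, g⟩` encodes the simplex with the vertices `(j, g j)`, one on each line `j`, and
`(j₀, g j₀ + 1)`. -/
def simplexIndex (m : ℕ) : Finset (Σ _ : Fin k, Fin k → ℕ) :=
  univ.sigma fun j₀ => Fintype.piFinset fun j => range (if j = j₀ then m - 1 else m)

lemma card_simplexIndex (m : ℕ) : #(simplexIndex (k := k) m) = k * (m - 1) * m ^ (k - 1) := by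
  have hfiber : ∀ j₀ : Fin k,
      ∏ j, #(range (if j = j₀ then m - 1 else m)) = (m - 1) * m ^ (k - 1) := by
    intro j₀
    rw [Fintype.prod_eq_mul_prod_compl j₀, if_pos rfl, card_range,
      prod_congr rfl fun j hj => by rw [if_neg (mem_compl.mp hj ∘ mem_singleton.mpr), card_range],
      prod_const, card_compl, card_singleton, Fintype.card_fin]
  rw [simplexIndex, card_sigma]
  simp only [Fintype.card_piFinset, hfiber, sum_const, card_univ, Fintype.card_fin, smul_eq_mul]
  ring

variable [NeZero k]

def point (q : Fin k × ℕ) : Fin k → ℝ :=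
  fun x => if x = 0 then q.2 else if x = q.1 then 1 else 0

lemma point_injective : Function.Injective (point (k := k)) := by
  have line_eq : ∀ {j j' : Fin k} {i i' : ℕ}, point (j, i) = point (j', i') → j ≠ 0 → j = j' := by
    intro j j' i i' h hj
    simpa [point, hj] using congrFun h j
  rintro ⟨j, i⟩ ⟨j', i'⟩ h
  have hi : i = i' := by simpa [point] using congrFun h 0
  have hj : j = j' := by
    by_cases hj : j = 0
    · by_cases hj' : j' = 0
      · rw [hj, hj']
      · exact (line_eq h.symm hj').symm
    · exact line_eq h hj
  rw [hi, hj]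

lemma point_succ (j : Fin k) (i : ℕ) :
    point (j, i + 1) = point (j, i) + Pi.single 0 1 := by
  ext x
  by_cases hx : x = 0 <;> simp [point, hx]

lemma point_apply_eq_intCast (q : Fin k × ℕ) (x : Fin k) : ∃ z : ℤ, point q x = z := by
  unfold point
  split_ifs
  exacts [⟨q.2, rfl⟩, ⟨1, by simp⟩, ⟨0, by simp⟩]

def vertex (j₀ : Fin k) (g : Fin k → ℕ) : Fin (k + 1) → Fin k × ℕ :=
  Fin.cons (0, g 0) fun i => if i = 0 then (j₀, g j₀ + 1) else (i, g i)

lemma range_vertex (j₀ : Fin k) (g : Fin k → ℕ) :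
    Set.range (vertex j₀ g) = insert (j₀, g j₀ + 1) {q | q.2 = g q.1} := by
  ext ⟨j, i⟩
  simp only [Set.mem_range, Set.mem_insert_iff, Set.mem_ofPred_eq, Prod.mk.injEq]
  constructor
  · rintro ⟨v, hv⟩
    cases v using Fin.cases with
    | zero =>
      rw [vertex, Fin.cons_zero, Prod.mk.injEq] at hv
      exact Or.inr (hv.1 ▸ hv.2.symm)
    | succ v =>
      rw [vertex, Fin.cons_succ] at hv
      split_ifs at hv <;> rw [Prod.mk.injEq] at hv
      · exact Or.inl ⟨hv.1.symm, hv.2.symm⟩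
      · exact Or.inr (hv.1 ▸ hv.2.symm)
  · rintro (⟨rfl, rfl⟩ | rfl)
    · exact ⟨Fin.succ 0, by rw [vertex, Fin.cons_succ, if_pos rfl]⟩
    · by_cases hj : j = 0
      · exact ⟨0, by simp [vertex, hj]⟩
      · exact ⟨j.succ, by simp [vertex, hj]⟩

noncomputable def gridPoints (m : ℕ) : Finset (Fin k → ℝ) := (univ ×ˢ range m).image point

lemma card_gridPoints (m : ℕ) : #(gridPoints (k := k) m) = k * m := by
  simp [gridPoints, card_image_of_injective _ point_injective]

lemma det_vertex (j₀ : Fin k) (g : Fin k → ℕ) :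
    (Matrix.of fun i : Fin k => point (vertex j₀ g i.succ) - point (vertex j₀ g 0)).det = 1 := by
  set R : Matrix (Fin k) (Fin k) ℝ := Matrix.of fun i => point (i, g i) - point (0, g 0)
  set L := R.updateRow 0 (Pi.single 0 1)
  have hrows : (Matrix.of fun i : Fin k => point (vertex j₀ g i.succ) - point (vertex j₀ g 0)) =
      L.updateRow 0 (L 0 + R j₀) := by
    ext i : 1
    by_cases hi : i = 0
    · subst hi
      simp only [vertex, Fin.cons_succ, Fin.cons_zero, Matrix.of_apply, ↓reduceIte, point_succ,
        Pi.sub_apply, Pi.add_apply, Matrix.updateRow_self, L, R]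
      abel
    · simp [L, R, vertex, hi]
  have hL : L.det = 1 := by
    rw [Matrix.det_of_isLowerTriangular]
    · refine prod_eq_one fun i _ => ?_
      by_cases hi : i = 0 <;> simp [L, R, point, hi]
    · intro i x (hix : i < x)
      have hx : x ≠ 0 := ne_bot_of_gt hix
      by_cases hi : i = 0 <;> simp [L, R, point, hi, hx, hix.ne']
  rw [hrows]
  by_cases hj : j₀ = 0
  · have hR : R j₀ = 0 := by ext x; simp [R, hj]
    simpa [hR] using hL
  · have hLR : L j₀ = R j₀ := Matrix.updateRow_ne hj
    rw [← hLR, ← one_smul ℝ (L j₀), Matrix.det_updateRow_add_smul_self L (Ne.symm hj), hL]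

lemma simplexVol_vertex (j₀ : Fin k) (g : Fin k → ℕ) :
    simplexVol k (point ∘ vertex j₀ g) = 1 / k ! := by
  simp [simplexVol, det_vertex]

lemma vertex_mem_of_mem_simplexIndex {m : ℕ} {t : Σ _ : Fin k, Fin k → ℕ}
    (ht : t ∈ simplexIndex m) (i : Fin (k + 1)) : vertex t.1 t.2 i ∈ univ ×ˢ range m := by
  have hg : ∀ j, t.2 j < if j = t.1 then m - 1 else m := by
    simpa [simplexIndex] using ht
  have hmem := Set.mem_range_self (f := vertex t.1 t.2) i
  rw [range_vertex] at hmem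
  rcases hmem with hq | hq
  · have := hg t.1
    rw [if_pos rfl] at this
    simp only [hq, mem_product, mem_univ, mem_range, true_and]
    omega
  · have := hg (vertex t.1 t.2 i).1
    simp only [Set.mem_ofPred_eq] at hq
    simp only [mem_product, mem_univ, mem_range, true_and, hq]
    split_ifs at this <;> omega

lemma image_vertex_injective :
    Function.Injective fun t : Σ _ : Fin k, Fin k → ℕ => univ.image (point ∘ vertex t.1 t.2) := by
  rintro ⟨j₀, g⟩ ⟨j₁, h⟩ hT
  have hrange : Set.range (vertex j₀ g) = Set.range (vertex j₁ h) := by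
    have := congrArg (fun T : Finset (Fin k → ℝ) => (T : Set (Fin k → ℝ))) hT
    simp only [coe_image, coe_univ, Set.image_univ, Set.range_comp] at this
    exact Set.image_injective.mpr point_injective this
  rw [range_vertex, range_vertex] at hrange
  obtain ⟨rfl, rfl⟩ := eq_of_insert_setOf_graph_eq hrange
  rfl

end ParallelLines

open ParallelLines in
/-- for every `k ≥ 1` and `n` divisible by `k` there is a set of
`n` points in `ℝᵏ` spanning at least `k * (n/k - 1) * (n/k)^(k-1)` simplices of
minimum nonzero `k`-volume. -/
theorem stmt3 (k n : ℕ) (hk : 1 ≤ k) (hkn : k ∣ n) :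
    ∃ S : Finset (Fin k → ℝ), S.card = n ∧
      ∃ v0 : ℝ, 0 < v0 ∧
        (∀ p : Fin (k + 1) → (Fin k → ℝ), (∀ i, p i ∈ S) →
          simplexVol k p ≠ 0 → v0 ≤ simplexVol k p) ∧
        k * (n / k - 1) * (n / k) ^ (k - 1) ≤
          {T : Finset (Fin k → ℝ) | T ⊆ S ∧ T.card = k + 1 ∧
            ∃ p : Fin (k + 1) → (Fin k → ℝ), Set.range p = ↑T ∧
              simplexVol k p = v0}.ncard := by
  have : NeZero k := ⟨by omega⟩
  obtain ⟨m, rfl⟩ := hkn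
  rw [Nat.mul_div_cancel_left m (by omega)]
  refine ⟨gridPoints m, card_gridPoints m, 1 / k !, by positivity, fun p hp hne => ?_, ?_⟩
  · refine one_div_factorial_le_simplexVol (fun i x => ?_) hne
    obtain ⟨q, -, hq⟩ := mem_image.mp (hp i)
    rw [← hq]
    exact point_apply_eq_intCast q x
  · rw [← card_simplexIndex, ← Set.ncard_coe_finset]
    refine Set.ncard_le_ncard_of_injOn _ (fun t ht => ?_) image_vertex_injective.injOn
      ((gridPoints m).powerset.finite_toSet.subset fun T hT => mem_powerset.mpr hT.1)
    have hvol := simplexVol_vertex t.1 t.2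
    refine ⟨?_, ?_, _, by rw [coe_image, coe_univ, Set.image_univ], hvol⟩
    · exact image_subset_iff.mpr fun i _ =>
        mem_image_of_mem point (vertex_mem_of_mem_simplexIndex ht i)
    · rw [card_image_of_injective _ (injective_of_simplexVol_ne_zero (by rw [hvol]; positivity)),
        card_univ, Fintype.card_fin]
end

section
/- Let $S$ be a set of $n$ noncollinear points in the plane such that at most $\ell$ points of $S$ are collinear, with $\ell \le n/2$ or a line containing $n/2$ points. If $S$ determines $\Omega(n^2)$ distinct segments lying on lines spanned by $S$ (as guaranteed by Beck's theorem), then $S$ determines at least $\Omega(n^2(n-\ell))$ nondegenerate triangles. -/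
/-!
Each pair `{a, b}` of points of `S` spans a nondegenerate triangle with every point of `S` off the
line `ab`, and at most `ℓ` points of `S` lie on that line, so each pair lies in at least `n - ℓ`
nondegenerate triangles. A triangle contains exactly three pairs, so double counting gives
`#pairs * (n - ℓ) ≤ 3 * #triangles`, and the bound `#pairs ≥ c₁ n²` finishes.
-/

open Finset

section Collinear

variable {k V P : Type*} [Field k] [AddCommGroup V] [Module k V] [AddTorsor V P]

theorem collinear_of_subset_affineSpan_pair {s : Set P} {a b : P}
    (h : s ⊆ line[k, a, b]) : Collinear k s := by
  refine (collinear_iff_exists_forall_eq_smul_vadd s).2 ⟨a, b -ᵥ a, fun p hp => ?_⟩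
  obtain ⟨r, hr⟩ := mem_affineSpan_pair_iff_exists_lineMap_eq.1 (h hp)
  exact ⟨r, by rw [← hr, AffineMap.lineMap_apply]⟩

theorem not_collinear_insert_pair_of_notMem_affineSpan {a b x : P} (hab : a ≠ b)
    (hx : x ∉ line[k, a, b]) : ¬ Collinear k ({x, a, b} : Set P) := fun h =>
  hx <| h.mem_affineSpan_of_mem_of_ne (by simp) (by simp) (by simp) hab

end Collinear

theorem Set.ncard_setOf_subset_ncard_eq_and {α : Type*} (F : Finset α) (m : ℕ)
    (p : Set α → Prop) [DecidablePred p] :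
    {T : Set α | T ⊆ ↑F ∧ T.ncard = m ∧ p T}.ncard =
      #((F.powersetCard m).filter fun t : Finset α => p t) := by
  have : {T : Set α | T ⊆ ↑F ∧ T.ncard = m ∧ p T} =
      (↑) '' (↑((F.powersetCard m).filter fun t : Finset α => p t) : Set (Finset α)) := by
    ext T
    constructor
    · rintro ⟨hTF, hTm, hpT⟩
      lift T to Finset α using F.finite_toSet.subset hTF
      refine ⟨T, ?_, rfl⟩
      simp_all [Set.ncard_coe_finset]
    · rintro ⟨t, ht, rfl⟩
      simp_all [Set.ncard_coe_finset]
  rw [this, Set.ncard_image_of_injective _ coe_injective, Set.ncard_coe_finset]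

namespace Finset

open Classical

variable (k : Type*) {V P : Type*} [Field k] [AddCommGroup V] [Module k V] [AddTorsor V P]

noncomputable def nondegenerateTriangles (F : Finset P) : Finset (Finset P) :=
  {t ∈ F.powersetCard 3 | ¬ Collinear k (t : Set P)}

variable {k} {F : Finset P} {ℓ : ℕ}

theorem card_sub_le_card_filter_notMem_affineSpan_pair
    (hF : ∀ T ⊆ F, Collinear k (T : Set P) → #T ≤ ℓ) (a b : P) :
    #F - ℓ ≤ #{x ∈ F | x ∉ line[k, a, b]} := by
  have hline : #{x ∈ F | x ∈ line[k, a, b]} ≤ ℓ :=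
    hF _ (filter_subset _ _) <|
      collinear_of_subset_affineSpan_pair fun x hx => (mem_filter.1 hx).2
  have := card_filter_add_card_filter_not (s := F) (· ∈ line[k, a, b])
  omega

theorem card_sub_le_card_nondegenerateTriangles_supset
    (hF : ∀ T ⊆ F, Collinear k (T : Set P) → #T ≤ ℓ) {p : Finset P}
    (hp : p ∈ F.powersetCard 2) :
    #F - ℓ ≤ #{t ∈ nondegenerateTriangles k F | p ⊆ t} := by
  obtain ⟨hpF, hp2⟩ := mem_powersetCard.1 hp
  obtain ⟨a, b, hab, rfl⟩ := card_eq_two.1 hp2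
  have notMem_pair {x} (hx : x ∉ line[k, a, b]) : x ∉ ({a, b} : Finset P) := fun h => hx <| by
    rcases mem_insert.1 h with rfl | h
    · exact left_mem_affineSpan_pair k x b
    rw [mem_singleton.1 h]
    exact right_mem_affineSpan_pair k a b
  refine (card_sub_le_card_filter_notMem_affineSpan_pair hF a b).trans <|
    card_le_card_of_injOn (fun x => insert x {a, b}) (fun x hx => ?_) (fun x hx y _ hxy => ?_)
  · obtain ⟨hxF, hx⟩ := mem_filter.1 hx
    simp only [coe_filter, nondegenerateTriangles, mem_filter, mem_powersetCard]
    refine ⟨⟨⟨insert_subset hxF hpF, ?_⟩, ?_⟩, subset_insert _ _⟩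
    · rw [card_insert_of_notMem (notMem_pair hx), hp2]
    · push_cast
      exact not_collinear_insert_pair_of_notMem_affineSpan hab hx
  · have hxy : x ∈ insert y ({a, b} : Finset P) := by
      rw [← show insert x {a, b} = insert y ({a, b} : Finset P) from hxy]
      exact mem_insert_self x {a, b}
    exact (mem_insert.1 hxy).resolve_right (notMem_pair (mem_filter.1 hx).2)

theorem card_powersetCard_two_mul_le (hF : ∀ T ⊆ F, Collinear k (T : Set P) → #T ≤ ℓ) :
    #(F.powersetCard 2) * (#F - ℓ) ≤ #(nondegenerateTriangles k F) * 3 := by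
  refine card_mul_le_card_mul (r := fun p t : Finset P => p ⊆ t)
    (fun _ hp => card_sub_le_card_nondegenerateTriangles_supset hF hp) fun t ht => ?_
  have ht3 : #t = 3 := (mem_powersetCard.1 (mem_filter.1 ht).1).2
  calc #{p ∈ F.powersetCard 2 | p ⊆ t} ≤ #(t.powersetCard 2) :=
        card_le_card fun p hp =>
          mem_powersetCard.2 ⟨(mem_filter.1 hp).2, (mem_powersetCard.1 (mem_filter.1 hp).1).2⟩
    _ = 3 := by rw [card_powersetCard, ht3]; rfl

end Finset

/-- a set of `n` noncollinear points in the plane, with at most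
`ℓ` points collinear, determining `Ω(n²)` distinct segments, determines at
least `Ω(n² (n - ℓ))` nondegenerate triangles. -/
theorem stmt5 (c1 : ℝ) (hc1 : 0 < c1) :
    ∃ c : ℝ, 0 < c ∧
      ∀ (n ℓ : ℕ) (S : Set (Fin 2 → ℝ)), S.Finite → S.ncard = n →
        ¬ Collinear ℝ S →
        (∀ T : Set (Fin 2 → ℝ), T ⊆ S → Collinear ℝ T → T.ncard ≤ ℓ) →
        ((ℓ : ℝ) ≤ n / 2 ∨
          ∃ T : Set (Fin 2 → ℝ), T ⊆ S ∧ Collinear ℝ T ∧ (n : ℝ) / 2 ≤ T.ncard) →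
        c1 * n ^ 2 ≤ ({P : Set (Fin 2 → ℝ) | P ⊆ S ∧ P.ncard = 2}.ncard : ℝ) →
        c * n ^ 2 * ((n - ℓ : ℕ) : ℝ) ≤
          ({T : Set (Fin 2 → ℝ) | T ⊆ S ∧ T.ncard = 3 ∧ ¬ Collinear ℝ T}.ncard : ℝ) := by
  classical
  refine ⟨c1 / 3, by positivity, fun n ℓ S hS hn _ hcol _ hpairs => ?_⟩
  lift S to Finset (Fin 2 → ℝ) using hS
  rw [Set.ncard_coe_finset] at hn
  subst hn
  have hP : {P : Set (Fin 2 → ℝ) | P ⊆ S ∧ P.ncard = 2}.ncard = #(S.powersetCard 2) := by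
    simpa only [and_true, filter_true] using Set.ncard_setOf_subset_ncard_eq_and S 2 fun _ => True
  rw [hP] at hpairs
  have key : (#(S.powersetCard 2) * (#S - ℓ : ℕ) : ℝ) ≤ #(nondegenerateTriangles ℝ S) * 3 := by
    exact_mod_cast card_powersetCard_two_mul_le fun T hTS hT => by
      simpa using hcol T (by simpa using hTS) hT
  rw [Set.ncard_setOf_subset_ncard_eq_and]
  exact show _ ≤ (#(nondegenerateTriangles ℝ S) : ℝ) by
    nlinarith [mul_le_mul_of_nonneg_right hpairs (Nat.cast_nonneg (#S - ℓ))]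
end

section
/- Let $F$ be a $(d-1)$-dimensional simplex in $\mathbb{R}^d$ with $(d-2)$-dimensional face $G$ spanned by all vertices of $F$ except $p_2$, and let $q \in \mathbb{R}^d$. Project orthogonally onto the 2-dimensional plane $\pi$ orthogonal to the affine hull $A$ of $G$; write $\tilde{p}$ for the projection of $p$ (so $A$ projects to a single point $\tilde{p}_1$). Then $\mathrm{vol}_d(\mathrm{simplex}(F \cup \{q\})) = \frac{2!\,(d-2)!}{d!}\,\mathrm{area}(\triangle \tilde p_1 \tilde p_2 \tilde q)\,\mathrm{vol}_{d-2}(G)$. -/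
open scoped RealInnerProductSpace

def sumEquiv (n : ℕ) : Fin 2 ⊕ Fin n ≃ Fin (n + 2) :=
  finSumFinEquiv.trans (finCongr (by omega))

lemma det_blocks_aux {n : ℕ} (A : Matrix (Fin 2) (Fin 2) ℝ) (Dm : Matrix (Fin n) (Fin n) ℝ)
    (M : Matrix (Fin (n + 2)) (Fin (n + 2)) ℝ)
    (h00 : M 0 0 = A 0 0) (h01 : M 0 1 = A 0 1) (h10 : M 1 0 = A 1 0) (h11 : M 1 1 = A 1 1)
    (h0s : ∀ j : Fin n, M 0 j.succ.succ = 0) (h1s : ∀ j : Fin n, M 1 j.succ.succ = 0)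
    (hs0 : ∀ i : Fin n, M i.succ.succ 0 = 0) (hs1 : ∀ i : Fin n, M i.succ.succ 1 = 0)
    (hss : ∀ i j : Fin n, M i.succ.succ j.succ.succ = Dm i j) :
    M.det = A.det * Dm.det := by
  have he_inr : ∀ j : Fin n, sumEquiv n (Sum.inr j) = (j.succ.succ : Fin (n+2)) := by
    intro j; apply Fin.ext
    simp [sumEquiv, finCongr_apply, Fin.coe_cast]
    try omega
  have he0 : sumEquiv n (Sum.inl 0) = (0 : Fin (n+2)) := by
    apply Fin.ext; simp [sumEquiv, finCongr_apply]
  have he1 : sumEquiv n (Sum.inl 1) = (1 : Fin (n+2)) := by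
    apply Fin.ext; simp [sumEquiv, finCongr_apply]
  rw [← Matrix.det_submatrix_equiv_self (sumEquiv n) M]
  have : M.submatrix (sumEquiv n) (sumEquiv n) = Matrix.fromBlocks A 0 0 Dm := by
    ext i j
    rcases i with i | i <;> rcases j with j | j
    · fin_cases i <;> fin_cases j <;>
        simp [he0, he1, h00, h01, h10, h11]
    · fin_cases i <;> simp [he0, he1, he_inr, h0s, h1s]
    · fin_cases j <;> simp [he0, he1, he_inr, hs0, hs1]
    · simp [he_inr, hss]
  rw [this, Matrix.det_fromBlocks_zero₂₁]

lemma det_row_combo {k : ℕ} (A B : Matrix (Fin k) (Fin k) ℝ) (r : Fin k) (c : Fin k → ℝ)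
    (hcr : c r = 0)
    (hrow : ∀ i, i ≠ r → B i = A i) (hr : B r = A r + ∑ j, c j • A j) :
    B.det = A.det := by
  have hB : B = A.updateRow r (A r + ∑ j, c j • A j) := by
    ext i j
    by_cases h : i = r
    · subst h; rw [Matrix.updateRow_self, hr]
    · rw [Matrix.updateRow_ne h, hrow i h]
  rw [hB, Matrix.det_updateRow_add, Matrix.updateRow_eq_self, Matrix.det_updateRow_sum, hcr]
  simp

/-- for `d = m + 3 ≥ 3`, let `G` (an affinely independent set of
`d - 1` points) span the `(d-2)`-face of the `d`-simplex with further vertices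
`p₂` and `q`.  Projecting orthogonally onto the 2-plane orthogonal to the
direction space of `aff(G)`, the `d`-volume of the simplex factors as
`(2!(d-2)!/d!) · area(p̃₁ p̃₂ q̃) · vol_{d-2}(G)`. -/
theorem stmt12 (m : ℕ) (G : Fin (m + 2) → EuclideanSpace ℝ (Fin (m + 3)))
    (p2 q : EuclideanSpace ℝ (Fin (m + 3)))
    (hG : AffineIndependent ℝ G)
    (hFull : AffineIndependent ℝ (Fin.cons q (Fin.cons p2 G) :
      Fin (m + 4) → EuclideanSpace ℝ (Fin (m + 3))))
    (edges : Fin (m + 1) → EuclideanSpace ℝ (Fin (m + 3)))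
    (hedges : edges = fun i => G i.succ - G 0)
    (K : Submodule ℝ (EuclideanSpace ℝ (Fin (m + 3))))
    (hK : K = Submodule.span ℝ (Set.range edges))
    (proj : EuclideanSpace ℝ (Fin (m + 3)) → EuclideanSpace ℝ (Fin (m + 3)))
    (hproj : proj = fun x => (Kᗮ.orthogonalProjectionOnto x : EuclideanSpace ℝ (Fin (m + 3))))
    (volG area vold : ℝ)
    (hvolG : volG = Real.sqrt
        (Matrix.det (Matrix.of fun i j : Fin (m + 1) => ⟪edges i, edges j⟫)) /
      (Nat.factorial (m + 1)))
    (harea : area = Real.sqrt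
        (‖proj p2 - proj (G 0)‖ ^ 2 * ‖proj q - proj (G 0)‖ ^ 2 -
          ⟪proj p2 - proj (G 0), proj q - proj (G 0)⟫ ^ 2) / 2)
    (hvold : vold =
      |Matrix.det (Matrix.of (Fin.cons (fun j => (p2 - q) j)
          (fun (i : Fin (m + 2)) (j : Fin (m + 3)) => (G i - q) j)))| /
        (Nat.factorial (m + 3))) :
    vold = 2 * (Nat.factorial (m + 1)) / (Nat.factorial (m + 3)) * area * volG := by
  classical
  set a : EuclideanSpace ℝ (Fin (m + 3)) := proj p2 - proj (G 0) with ha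
  set b : EuclideanSpace ℝ (Fin (m + 3)) := proj q - proj (G 0) with hb
  have subap : ∀ (x y : EuclideanSpace ℝ (Fin (m + 3))) (j : Fin (m + 3)),
      (x - y) j = x j - y j := fun _ _ _ => rfl
  have negap : ∀ (x : EuclideanSpace ℝ (Fin (m + 3))) (j : Fin (m + 3)),
      (-x) j = -(x j) := fun _ _ => rfl
  have hprojsub : ∀ x y : EuclideanSpace ℝ (Fin (m + 3)), proj x - proj y =
      ((Kᗮ.orthogonalProjectionOnto (x - y)) : EuclideanSpace ℝ (Fin (m + 3))) := by
    intro x y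
    simp only [hproj]
    rw [map_sub]
    exact (AddSubgroupClass.coe_sub _ _).symm
  have haMem : a ∈ Kᗮ := by rw [ha, hprojsub]; exact SetLike.coe_mem _
  have hbMem : b ∈ Kᗮ := by rw [hb, hprojsub]; exact SetLike.coe_mem _
  have hKo : Kᗮᗮ = K := Submodule.orthogonal_orthogonal K
  have haK : (p2 - G 0) - a ∈ K := by
    rw [← hKo, ha, hprojsub]
    exact Submodule.sub_starProjection_mem_orthogonal (K := Kᗮ) _
  have hbK : (q - G 0) - b ∈ K := by
    rw [← hKo, hb, hprojsub]
    exact Submodule.sub_starProjection_mem_orthogonal (K := Kᗮ) _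
  obtain ⟨ca, hca⟩ := (Submodule.mem_span_range_iff_exists_fun ℝ).mp (hK ▸ haK)
  obtain ⟨cb, hcb⟩ := (Submodule.mem_span_range_iff_exists_fun ℝ).mp (hK ▸ hbK)
  have hca' : ∀ j, ∑ i, ca i * edges i j = p2 j - G 0 j - a j := by
    intro j
    have := congrArg (EuclideanSpace.proj j) hca
    simpa [map_sum, map_sub, map_smul, smul_eq_mul] using this
  have hcb' : ∀ j, ∑ i, cb i * edges i j = q j - G 0 j - b j := by
    intro j
    have := congrArg (EuclideanSpace.proj j) hcb
    simpa [map_sum, map_sub, map_smul, smul_eq_mul] using this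
  have hedK : ∀ i, edges i ∈ K := fun i => by
    rw [hK]; exact Submodule.subset_span ⟨i, rfl⟩
  have hae : ∀ i, ⟪a, edges i⟫ = 0 := fun i =>
    Submodule.inner_left_of_mem_orthogonal (hedK i) haMem
  have hbe : ∀ i, ⟪b, edges i⟫ = 0 := fun i =>
    Submodule.inner_left_of_mem_orthogonal (hedK i) hbMem
  have hinner : ∀ x y : EuclideanSpace ℝ (Fin (m + 3)), ⟪x, y⟫ = ∑ k, x k * y k := by
    intro x y
    simp [PiLp.inner_apply, RCLike.inner_apply, mul_comm]
  -- the three matrices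
  set D : Matrix (Fin (m + 3)) (Fin (m + 3)) ℝ :=
    Matrix.of (Fin.cons (fun j => (p2 - q) j)
      (fun (i : Fin (m + 2)) (j : Fin (m + 3)) => (G i - q) j)) with hD
  set D1 : Matrix (Fin (m + 3)) (Fin (m + 3)) ℝ :=
    Matrix.of (Fin.cons (fun j => (p2 - G 0) j)
      (Fin.cons (fun j => (G 0 - q) j)
        (fun (i : Fin (m + 1)) (j : Fin (m + 3)) => edges i j))) with hD1
  set D2 : Matrix (Fin (m + 3)) (Fin (m + 3)) ℝ :=
    Matrix.of (Fin.cons (fun j => a j)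
      (Fin.cons (fun j => (-b) j)
        (fun (i : Fin (m + 1)) (j : Fin (m + 3)) => edges i j))) with hD2
  -- step 1 : det D = det D1
  have step1 : D.det = D1.det := by
    apply Matrix.det_eq_of_forall_row_eq_smul_add_const
      (Fin.cons (1 : ℝ) (Fin.cons 0 (fun _ : Fin (m + 1) => 1)) : Fin (m + 3) → ℝ) 1 rfl
    intro i j
    obtain rfl | ⟨i, rfl⟩ := i.eq_zero_or_eq_succ
    · show (p2 - q) j = (p2 - G 0) j + 1 * (G 0 - q) j
      rw [subap, subap, subap]; ring
    · obtain rfl | ⟨i, rfl⟩ := i.eq_zero_or_eq_succ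
      · show (G 0 - q) j = (G 0 - q) j + 0 * (G 0 - q) j
        ring
      · show (G i.succ - q) j = edges i j + 1 * (G 0 - q) j
        rw [hedges]
        show (G i.succ - q) j = (G i.succ - G 0) j + 1 * (G 0 - q) j
        rw [subap, subap, subap]; ring
  -- step 2 : det D1 = det D2
  have hsum : ∀ r : Fin (m + 1) → ℝ, ∀ Mx : Matrix (Fin (m + 3)) (Fin (m + 3)) ℝ,
      (∑ t : Fin (m + 3), (Fin.cons (0:ℝ) (Fin.cons 0 r) : Fin (m + 3) → ℝ) t • Mx t)
        = ∑ i : Fin (m + 1), r i • Mx i.succ.succ := by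
    intro r Mx
    rw [Fin.sum_univ_succ, Fin.sum_univ_succ]
    simp only [Fin.cons_zero, Fin.cons_succ, zero_smul, zero_add]
  have step2 : D2.det = D1.det := by
    set M1 : Matrix (Fin (m + 3)) (Fin (m + 3)) ℝ :=
      Matrix.of (Fin.cons (fun j => a j)
        (Fin.cons (fun j => (G 0 - q) j)
          (fun (i : Fin (m + 1)) (j : Fin (m + 3)) => edges i j))) with hM1
    have s21 : M1.det = D1.det := by
      apply det_row_combo D1 M1 0
        (Fin.cons 0 (Fin.cons 0 (fun i => -(ca i)))) rfl
      · intro i hi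
        obtain rfl | ⟨i, rfl⟩ := i.eq_zero_or_eq_succ
        · exact absurd rfl hi
        · rfl
      · rw [hsum]
        funext j
        show a j = (p2 - G 0) j + (∑ i : Fin (m + 1), (-(ca i)) • D1 i.succ.succ) j
        rw [Finset.sum_apply, subap p2 (G 0) j]
        have h := hca' j
        have : ∀ i : Fin (m + 1), ((-(ca i)) • D1 i.succ.succ) j = -(ca i * edges i j) := by
          intro i
          show -(ca i) * edges i j = _
          ring
        rw [Finset.sum_congr rfl fun i _ => this i, Finset.sum_neg_distrib]
        linarith
    have s22 : D2.det = M1.det := by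
      apply det_row_combo M1 D2 1
        (Fin.cons 0 (Fin.cons 0 cb)) rfl
      · intro i hi
        obtain rfl | ⟨i, rfl⟩ := i.eq_zero_or_eq_succ
        · rfl
        · obtain rfl | ⟨i, rfl⟩ := i.eq_zero_or_eq_succ
          · exact absurd rfl hi
          · rfl
      · rw [hsum]
        funext j
        show (-b) j = (G 0 - q) j + (∑ i : Fin (m + 1), cb i • M1 i.succ.succ) j
        rw [Finset.sum_apply, subap, negap]
        have h := hcb' j
        have : ∀ i : Fin (m + 1), (cb i • M1 i.succ.succ) j = cb i * edges i j := fun i => rfl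
        rw [Finset.sum_congr rfl fun i _ => this i]
        linarith
    rw [s22, s21]
  -- step 3
  set Adet : ℝ := ‖a‖ ^ 2 * ‖b‖ ^ 2 - ⟪a, b⟫ ^ 2 with hAdet
  set Gdet : ℝ := Matrix.det (Matrix.of fun i j : Fin (m + 1) => ⟪edges i, edges j⟫) with hGdet
  have step3 : D2.det ^ 2 = Adet * Gdet := by
    have h1 : D2.det ^ 2 = (D2 * D2.transpose).det := by
      rw [Matrix.det_mul, Matrix.det_transpose, sq]
    rw [h1]
    have hmul : ∀ (x y : Fin (m + 3) → ℝ) (i j : Fin (m + 3)),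
        D2 i = x → D2 j = y → (D2 * D2.transpose) i j = ∑ k, x k * y k := by
      intro x y i j hx hy
      rw [Matrix.mul_apply]
      simp [Matrix.transpose_apply, hx, hy]
    have hB := det_blocks_aux
      !![‖a‖ ^ 2, -⟪a, b⟫; -⟪a, b⟫, ‖b‖ ^ 2]
      (Matrix.of fun i j : Fin (m + 1) => ⟪edges i, edges j⟫)
      (D2 * D2.transpose) ?_ ?_ ?_ ?_ ?_ ?_ ?_ ?_ ?_
    · rw [hB, Matrix.det_fin_two_of, hAdet]
      ring
    · rw [hmul (fun k => a k) (fun k => a k) 0 0 rfl rfl, ← hinner,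
        real_inner_self_eq_norm_sq]
      simp
    · rw [hmul (fun k => a k) (fun k => (-b) k) 0 1 rfl rfl]
      have : ∑ k, a k * (-b) k = ⟪a, -b⟫ := (hinner a (-b)).symm
      rw [this, inner_neg_right]
      simp
    · rw [hmul (fun k => (-b) k) (fun k => a k) 1 0 rfl rfl]
      have : ∑ k, (-b) k * a k = ⟪-b, a⟫ := (hinner (-b) a).symm
      rw [this, inner_neg_left, real_inner_comm]
      simp
    · rw [hmul (fun k => (-b) k) (fun k => (-b) k) 1 1 rfl rfl]
      have : ∑ k, (-b) k * (-b) k = ⟪-b, -b⟫ := (hinner (-b) (-b)).symm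
      rw [this, inner_neg_neg, real_inner_self_eq_norm_sq]
      simp
    · intro j
      rw [hmul (fun k => a k) (fun k => edges j k) 0 j.succ.succ rfl rfl, ← hinner]
      exact hae j
    · intro j
      rw [hmul (fun k => (-b) k) (fun k => edges j k) 1 j.succ.succ rfl rfl]
      have : ∑ k, (-b) k * edges j k = ⟪-b, edges j⟫ := (hinner (-b) (edges j)).symm
      rw [this, inner_neg_left, hbe]
      simp
    · intro i
      rw [hmul (fun k => edges i k) (fun k => a k) i.succ.succ 0 rfl rfl, ← hinner,
        real_inner_comm]
      exact hae i
    · intro i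
      rw [hmul (fun k => edges i k) (fun k => (-b) k) i.succ.succ 1 rfl rfl]
      have : ∑ k, edges i k * (-b) k = ⟪edges i, -b⟫ := (hinner (edges i) (-b)).symm
      rw [this, inner_neg_right, real_inner_comm, hbe]
      simp
    · intro i j
      rw [hmul (fun k => edges i k) (fun k => edges j k) i.succ.succ j.succ.succ rfl rfl,
        ← hinner]
      rfl
  -- assembling
  have hA0 : 0 ≤ Adet := by
    have h := real_inner_mul_inner_self_le a b
    rw [real_inner_self_eq_norm_sq, real_inner_self_eq_norm_sq] at h
    rw [hAdet]
    nlinarith [h]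
  have habs : |D.det| = Real.sqrt Adet * Real.sqrt Gdet := by
    rw [step1, ← step2, ← Real.sqrt_sq_eq_abs, step3, Real.sqrt_mul hA0]
  have hf1 : ((m + 1).factorial : ℝ) ≠ 0 := Nat.cast_ne_zero.mpr (m + 1).factorial_ne_zero
  have hf3 : ((m + 3).factorial : ℝ) ≠ 0 := Nat.cast_ne_zero.mpr (m + 3).factorial_ne_zero
  rw [hvold, habs, harea, hvolG]
  field_simp
end

section
/- Given $n$ points in the plane, the number of incidences between the $n$ points and the set of all $k$-rich lines ($k \ge 2$) is $O(n^2/k^2 + n)$. -/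
/-!
Write the incidence count as `∑ r(L)` over the `k`-rich lines `L`, where `r(L) = |S ∩ L|`.
For the lines with `r(L) ≤ √n` the layer-cake identity `∑ r(L) = k |L_k| + ∑_{k < m ≤ √n} |L_m|`
and the Szemerédi–Trotter bound `|L_m| ≲ n²/m³` (its `n/m` term is smaller there) give
`O(n²/k²)`. The lines with `r(L) > √n` are only `O(√n)` many, and since two of them share at
most one point, a point lying on `d` of them accounts for `d(d-1)` ordered pairs of such lines;
hence they carry at most `n + O(√n)² = O(n)` incidences.
-/

open Finset

/-- `L` is a line in the plane (as a set of points). -/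
def IsLine (L : Set (Fin 2 → ℝ)) : Prop :=
  ∃ p v : Fin 2 → ℝ, v ≠ 0 ∧ L = {x | ∃ t : ℝ, x = p + t • v}

section Incidences

open scoped Classical

variable {α : Type*}

lemma ncard_coe_inter_eq_card_filter (P : Finset α) (L : Set α) :
    ((P : Set α) ∩ L).ncard = #{p ∈ P | p ∈ L} := by
  rw [← Set.ncard_coe_finset, coe_filter]
  rfl

lemma ncard_incidences_eq_sum (P : Finset α) (𝔏 : Finset (Set α)) :
    {I : α × Set α | I.1 ∈ P ∧ I.2 ∈ 𝔏 ∧ I.1 ∈ I.2}.ncard = ∑ L ∈ 𝔏, #{p ∈ P | p ∈ L} := by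
  have : {I : α × Set α | I.1 ∈ P ∧ I.2 ∈ 𝔏 ∧ I.1 ∈ I.2} = ↑{I ∈ P ×ˢ 𝔏 | I.1 ∈ I.2} := by
    ext; simp [and_assoc]
  rw [this, Set.ncard_coe_finset, card_filter, sum_product_right]
  simp only [card_filter]

lemma finite_setOf_two_le_ncard_inter {𝓛 : Set (Set α)}
    (h𝓛 : 𝓛.Pairwise fun L L' => (L ∩ L').Subsingleton) {S : Set α} (hS : S.Finite) :
    {L ∈ 𝓛 | 2 ≤ (S ∩ L).ncard}.Finite := by
  refine Set.Finite.of_finite_image (f := (S ∩ ·)) (hS.finite_subsets.subset ?_) ?_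
  · rintro _ ⟨L, -, rfl⟩
    exact Set.inter_subset_left
  · rintro L₁ ⟨hL₁, h₁⟩ L₂ ⟨hL₂, -⟩ hS₁₂
    obtain ⟨a, b, ha, hb, hab⟩ := (Set.one_lt_ncard_iff (hS.subset Set.inter_subset_left)).1 h₁
    have ha₂ : a ∈ S ∩ L₂ := by simpa only [← hS₁₂]
    have hb₂ : b ∈ S ∩ L₂ := by simpa only [← hS₁₂]
    by_contra hne
    exact hab (h𝓛 hL₁ hL₂ hne ⟨ha.2, ha₂.2⟩ ⟨hb.2, hb₂.2⟩)

lemma sum_card_filter_mem_le_card_add_sq (P : Finset α) (𝔅 : Finset (Set α))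
    (h𝔅 : (𝔅 : Set (Set α)).Pairwise fun L L' => (L ∩ L').Subsingleton) :
    ∑ L ∈ 𝔅, #{p ∈ P | p ∈ L} ≤ #P + #𝔅 ^ 2 := by
  have hdeg : ∀ p, #{L ∈ 𝔅 | p ∈ L} ≤ 1 + #{LL ∈ 𝔅.offDiag | p ∈ LL.1 ∧ p ∈ LL.2} := by
    intro p
    have : {LL ∈ 𝔅.offDiag | p ∈ LL.1 ∧ p ∈ LL.2} = {L ∈ 𝔅 | p ∈ L}.offDiag := by
      ext; simp only [mem_filter, mem_offDiag]; tauto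
    rw [this, offDiag_card]
    have := Nat.sub_add_cancel (Nat.le_mul_self #{L ∈ 𝔅 | p ∈ L})
    nlinarith
  have hpairs : ∑ p ∈ P, #{LL ∈ 𝔅.offDiag | p ∈ LL.1 ∧ p ∈ LL.2} ≤ #𝔅 ^ 2 :=
    calc ∑ p ∈ P, #{LL ∈ 𝔅.offDiag | p ∈ LL.1 ∧ p ∈ LL.2}
        = ∑ LL ∈ 𝔅.offDiag, #{p ∈ P | p ∈ LL.1 ∧ p ∈ LL.2} :=
          sum_card_bipartiteAbove_eq_sum_card_bipartiteBelow _
      _ ≤ ∑ LL ∈ 𝔅.offDiag, 1 := by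
          refine sum_le_sum fun LL hLL => card_le_one.2 fun p hp q hq => ?_
          obtain ⟨h₁, h₂, hne⟩ := mem_offDiag.1 hLL
          exact h𝔅 h₁ h₂ hne (mem_filter.1 hp).2 (mem_filter.1 hq).2
      _ ≤ #𝔅 ^ 2 := by
          rw [sum_const, smul_eq_mul, mul_one, offDiag_card, sq]
          exact Nat.sub_le _ _
  calc ∑ L ∈ 𝔅, #{p ∈ P | p ∈ L}
      = ∑ p ∈ P, #{L ∈ 𝔅 | p ∈ L} :=
        (sum_card_bipartiteAbove_eq_sum_card_bipartiteBelow _).symm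
    _ ≤ ∑ p ∈ P, (1 + #{LL ∈ 𝔅.offDiag | p ∈ LL.1 ∧ p ∈ LL.2}) := sum_le_sum fun p _ => hdeg p
    _ ≤ #P + #𝔅 ^ 2 := by
        rw [sum_add_distrib, sum_const, smul_eq_mul, mul_one]
        exact Nat.add_le_add_left hpairs _

end Incidences

lemma sum_eq_mul_card_add_sum_card_filter {ι : Type*} (A : Finset ι) (r : ι → ℕ) {k M : ℕ}
    (hA : ∀ L ∈ A, k ≤ r L ∧ r L ≤ M) :
    ∑ L ∈ A, r L = k * #A + ∑ m ∈ Ioc k M, #{L ∈ A | m ≤ r L} := by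
  have hr : ∀ L ∈ A, r L = k + #{m ∈ Ioc k M | m ≤ r L} := by
    intro L hL
    obtain ⟨hkL, hLM⟩ := hA L hL
    have : {m ∈ Ioc k M | m ≤ r L} = Ioc k (r L) := by
      ext m; simp only [mem_filter, mem_Ioc]; omega
    rw [this, Nat.card_Ioc]
    omega
  rw [sum_congr rfl hr, sum_add_distrib, sum_const, smul_eq_mul, mul_comm]
  exact congrArg _ (sum_card_bipartiteAbove_eq_sum_card_bipartiteBelow _)

lemma sum_Ioc_inv_pow_three_le {k : ℕ} (hk : 0 < k) (M : ℕ) :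
    ∑ m ∈ Ioc k M, ((m : ℝ) ^ 3)⁻¹ ≤ 2 / (k : ℝ) ^ 2 := by
  have hk' : (0 : ℝ) < k := by exact_mod_cast hk
  calc ∑ m ∈ Ioc k M, ((m : ℝ) ^ 3)⁻¹
      ≤ ∑ m ∈ Ioo k (M + 1), (k : ℝ)⁻¹ * ((m : ℝ) ^ 2)⁻¹ := by
        rw [Finset.Ioo_add_one_right_eq_Ioc]
        refine sum_le_sum fun m hm => ?_
        have hkm : (k : ℝ) ≤ m := by exact_mod_cast (mem_Ioc.1 hm).1.le
        rw [← mul_inv, pow_succ' (m : ℝ) 2]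
        have : (0 : ℝ) < m := hk'.trans_le hkm
        gcongr
    _ = (k : ℝ)⁻¹ * ∑ m ∈ Ioo k (M + 1), ((m : ℝ) ^ 2)⁻¹ := by rw [mul_sum]
    _ ≤ (k : ℝ)⁻¹ * (2 / (k + 1)) := by gcongr; exact sum_Ioo_inv_sq_le k (M + 1)
    _ ≤ 2 / (k : ℝ) ^ 2 := by
        rw [inv_mul_eq_div, div_div, sq]
        gcongr
        linarith

section RichFamily

variable {ι : Type*} {𝔏 : Finset ι} {r : ι → ℕ} {n : ℕ} {C : ℝ}

lemma sum_filter_le_of_sq_le (hC : 0 ≤ C)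
    (hrich : ∀ m, 2 ≤ m → (#{L ∈ 𝔏 | m ≤ r L} : ℝ) ≤ C * ((n : ℝ) ^ 2 / m ^ 3 + n / m))
    {k M : ℕ} (hk : 2 ≤ k) (hM : M ^ 2 ≤ n) :
    (∑ L ∈ 𝔏 with k ≤ r L ∧ r L ≤ M, r L : ℝ) ≤ 5 * C * ((n : ℝ) ^ 2 / k ^ 2 + n) := by
  set A := {L ∈ 𝔏 | k ≤ r L ∧ r L ≤ M}
  have hk' : (0 : ℝ) < k := by positivity
  have hA : (k * #A : ℝ) ≤ C * ((n : ℝ) ^ 2 / k ^ 2 + n) := by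
    have : (#A : ℝ) ≤ #{L ∈ 𝔏 | k ≤ r L} := by
      exact_mod_cast card_le_card (monotone_filter_right 𝔏 fun _ _ => And.left)
    calc (k * #A : ℝ) ≤ k * (C * ((n : ℝ) ^ 2 / k ^ 3 + n / k)) := by
          gcongr; exact this.trans (hrich k hk)
      _ = C * ((n : ℝ) ^ 2 / k ^ 2 + n) := by field_simp
  have hlayer : ∀ m ∈ Ioc k M, (#{L ∈ A | m ≤ r L} : ℝ) ≤ 2 * C * n ^ 2 * ((m : ℝ) ^ 3)⁻¹ := by
    intro m hm
    obtain ⟨hkm, hmM⟩ := mem_Ioc.1 hm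
    have hm' : (0 : ℝ) < m := by exact_mod_cast (by omega : 0 < m)
    have hmn : (m : ℝ) ^ 2 ≤ n := by exact_mod_cast (Nat.pow_le_pow_left hmM 2).trans hM
    have hsub : (#{L ∈ A | m ≤ r L} : ℝ) ≤ #{L ∈ 𝔏 | m ≤ r L} := by
      exact_mod_cast card_le_card (filter_subset_filter _ (filter_subset _ _))
    have : (n : ℝ) / m ≤ n ^ 2 / m ^ 3 := by
      rw [div_le_div_iff₀ hm' (by positivity)]
      nlinarith [mul_le_mul_of_nonneg_left hmn (by positivity : (0 : ℝ) ≤ n * m)]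
    calc (#{L ∈ A | m ≤ r L} : ℝ) ≤ C * ((n : ℝ) ^ 2 / m ^ 3 + n / m) :=
          hsub.trans (hrich m (by omega))
      _ ≤ C * ((n : ℝ) ^ 2 / m ^ 3 + n ^ 2 / m ^ 3) := by gcongr
      _ = 2 * C * n ^ 2 * ((m : ℝ) ^ 3)⁻¹ := by ring
  have hlayers : (∑ m ∈ Ioc k M, #{L ∈ A | m ≤ r L} : ℝ) ≤ 4 * C * ((n : ℝ) ^ 2 / k ^ 2) :=
    calc (∑ m ∈ Ioc k M, #{L ∈ A | m ≤ r L} : ℝ)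
        ≤ ∑ m ∈ Ioc k M, 2 * C * n ^ 2 * ((m : ℝ) ^ 3)⁻¹ := sum_le_sum hlayer
      _ = 2 * C * n ^ 2 * ∑ m ∈ Ioc k M, ((m : ℝ) ^ 3)⁻¹ := by rw [mul_sum]
      _ ≤ 2 * C * n ^ 2 * (2 / (k : ℝ) ^ 2) := by
          gcongr; exact sum_Ioc_inv_pow_three_le (by omega) M
      _ = 4 * C * ((n : ℝ) ^ 2 / k ^ 2) := by ring
  rw [← Nat.cast_sum, sum_eq_mul_card_add_sum_card_filter A r fun L hL => (mem_filter.1 hL).2]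
  push_cast
  have : 0 ≤ C * n := by positivity
  linarith

lemma sum_filter_le_of_le_sq (hC : 0 ≤ C)
    (hrich : ∀ m, 2 ≤ m → (#{L ∈ 𝔏 | m ≤ r L} : ℝ) ≤ C * ((n : ℝ) ^ 2 / m ^ 3 + n / m))
    (hpair : ∀ 𝔅 ⊆ 𝔏, ∑ L ∈ 𝔅, r L ≤ n + #𝔅 ^ 2) {m : ℕ} (hm : 2 ≤ m) (hnm : n ≤ m ^ 2) :
    (∑ L ∈ 𝔏 with m ≤ r L, r L : ℝ) ≤ (1 + 4 * C ^ 2) * n := by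
  set B := {L ∈ 𝔏 | m ≤ r L}
  have hm' : (0 : ℝ) < m := by positivity
  have hnm' : (n : ℝ) ≤ m ^ 2 := by exact_mod_cast hnm
  have hB : (#B : ℝ) ≤ 2 * C * (n / m) := by
    have : (n : ℝ) ^ 2 / m ^ 3 ≤ n / m := by
      rw [div_le_div_iff₀ (by positivity) hm']
      nlinarith [mul_le_mul_of_nonneg_left hnm' (by positivity : (0 : ℝ) ≤ n * m)]
    calc (#B : ℝ) ≤ C * ((n : ℝ) ^ 2 / m ^ 3 + n / m) := hrich m hm
      _ ≤ C * (n / m + n / m) := by gcongr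
      _ = 2 * C * (n / m) := by ring
  have hB2 : (#B : ℝ) ^ 2 ≤ 4 * C ^ 2 * n :=
    calc (#B : ℝ) ^ 2 ≤ (2 * C * (n / m)) ^ 2 := by gcongr
      _ = 4 * C ^ 2 * (n ^ 2 / m ^ 2) := by ring
      _ ≤ 4 * C ^ 2 * n := by
          gcongr
          rw [div_le_iff₀ (by positivity), sq]
          gcongr
  have : (∑ L ∈ B, r L : ℝ) ≤ n + #B ^ 2 := by exact_mod_cast hpair B (filter_subset _ _)
  linarith

lemma sum_filter_le_of_card_filter_le (hC : 0 ≤ C)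
    (hrich : ∀ m, 2 ≤ m → (#{L ∈ 𝔏 | m ≤ r L} : ℝ) ≤ C * ((n : ℝ) ^ 2 / m ^ 3 + n / m))
    (hpair : ∀ 𝔅 ⊆ 𝔏, ∑ L ∈ 𝔅, r L ≤ n + #𝔅 ^ 2) {k : ℕ} (hk : 2 ≤ k) :
    (∑ L ∈ 𝔏 with k ≤ r L, r L : ℝ) ≤ (4 * C ^ 2 + 5 * C + 1) * ((n : ℝ) ^ 2 / k ^ 2 + n) := by
  have hsplit : ∑ L ∈ 𝔏 with k ≤ r L, (r L : ℝ) =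
      ∑ L ∈ 𝔏 with k ≤ r L ∧ r L ≤ n.sqrt, (r L : ℝ) +
        ∑ L ∈ 𝔏 with max k (n.sqrt + 1) ≤ r L, (r L : ℝ) := by
    have hvery : {L ∈ 𝔏 | k ≤ r L ∧ ¬r L ≤ n.sqrt} = {L ∈ 𝔏 | max k (n.sqrt + 1) ≤ r L} :=
      filter_congr fun L _ => by rw [max_le_iff]; omega
    rw [← sum_filter_add_sum_filter_not _ fun L => r L ≤ n.sqrt, filter_filter, filter_filter,
      hvery]
  have hmoderate := sum_filter_le_of_sq_le hC hrich hk (Nat.sqrt_le' n)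
  have hvery := sum_filter_le_of_le_sq hC hrich hpair (m := max k (n.sqrt + 1)) (by omega)
    ((Nat.lt_succ_sqrt' n).le.trans (Nat.pow_le_pow_left (le_max_right _ _) 2))
  rw [hsplit]
  have : 0 ≤ (1 + 4 * C ^ 2) * ((n : ℝ) ^ 2 / k ^ 2) := by positivity
  nlinarith

end RichFamily

lemma IsLine.eq_setOf_add_smul_sub {L : Set (Fin 2 → ℝ)} (hL : IsLine L) {p q : Fin 2 → ℝ}
    (hp : p ∈ L) (hq : q ∈ L) (hpq : p ≠ q) :
    L = {x | ∃ t : ℝ, x = p + t • (q - p)} := by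
  obtain ⟨a, v, -, rfl⟩ := hL
  obtain ⟨s, rfl⟩ := hp
  obtain ⟨u, rfl⟩ := hq
  have hsu : u - s ≠ 0 := fun h => hpq (by rw [sub_eq_zero.1 h])
  have hqp : a + u • v - (a + s • v) = (u - s) • v := by module
  ext x
  constructor
  · rintro ⟨t, rfl⟩
    exact ⟨(t - s) / (u - s), by rw [hqp, smul_smul, div_mul_cancel₀ _ hsu]; module⟩
  · rintro ⟨t, rfl⟩
    exact ⟨s + t * (u - s), by rw [hqp, smul_smul]; module⟩

lemma pairwise_inter_subsingleton_setOf_isLine :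
    {L | IsLine L}.Pairwise fun L L' => (L ∩ L').Subsingleton := by
  intro L₁ h₁ L₂ h₂ hne p hp q hq
  by_contra hpq
  rw [h₁.eq_setOf_add_smul_sub hp.1 hq.1 hpq, h₂.eq_setOf_add_smul_sub hp.2 hq.2 hpq] at hne
  exact hne rfl

/-- assuming the Szemerédi–Trotter bound
`|L_k| = O(n²/k³ + n/k)` on the number of `k`-rich lines, the number of
incidences between `n` planar points and their `k`-rich lines (`k ≥ 2`) is
`O(n²/k² + n)`. -/
theorem stmt13 (C : ℝ) (hC : 0 < C)
    (hST : ∀ (S : Set (Fin 2 → ℝ)), S.Finite → ∀ k : ℕ, 2 ≤ k →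
      ({L : Set (Fin 2 → ℝ) | IsLine L ∧ k ≤ (S ∩ L).ncard}.ncard : ℝ) ≤
        C * ((S.ncard : ℝ) ^ 2 / (k : ℝ) ^ 3 + (S.ncard : ℝ) / (k : ℝ))) :
    ∃ C' : ℝ, 0 < C' ∧
      ∀ (S : Set (Fin 2 → ℝ)), S.Finite → ∀ (n : ℕ), S.ncard = n →
        ∀ k : ℕ, 2 ≤ k →
        ({I : (Fin 2 → ℝ) × Set (Fin 2 → ℝ) |
            I.1 ∈ S ∧ IsLine I.2 ∧ k ≤ (S ∩ I.2).ncard ∧ I.1 ∈ I.2}.ncard : ℝ) ≤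
          C' * ((n : ℝ) ^ 2 / (k : ℝ) ^ 2 + (n : ℝ)) := by
  classical
  refine ⟨4 * C ^ 2 + 5 * C + 1, by positivity, ?_⟩
  rintro S hS n rfl k hk
  obtain ⟨P, rfl⟩ := hS.exists_finset_coe
  have hlines := pairwise_inter_subsingleton_setOf_isLine
  set 𝔏 := (finite_setOf_two_le_ncard_inter hlines P.finite_toSet).toFinset
  have hmem : ∀ m, 2 ≤ m → ∀ L,
      L ∈ 𝔏 ∧ m ≤ #{p ∈ P | p ∈ L} ↔ IsLine L ∧ m ≤ #{p ∈ P | p ∈ L} := by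
    intro m hm L
    simp only [𝔏, Set.Finite.mem_toFinset, Set.mem_sep_iff, ncard_coe_inter_eq_card_filter]
    exact ⟨fun h => ⟨h.1.1, h.2⟩, fun h => ⟨⟨h.1, by omega⟩, h.2⟩⟩
  have hrich : ∀ m, 2 ≤ m →
      (#{L ∈ 𝔏 | m ≤ #{p ∈ P | p ∈ L}} : ℝ) ≤ C * ((#P : ℝ) ^ 2 / m ^ 3 + #P / m) := by
    intro m hm
    have := hST P P.finite_toSet m hm
    rw [Set.ncard_coe_finset] at this
    convert this using 2
    rw [← Set.ncard_coe_finset, coe_filter]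
    congr 1
    ext L
    simp only [Set.mem_ofPred_eq, hmem m hm, ncard_coe_inter_eq_card_filter]
  have hpair : ∀ 𝔅 ⊆ 𝔏, ∑ L ∈ 𝔅, #{p ∈ P | p ∈ L} ≤ #P + #𝔅 ^ 2 := fun 𝔅 h𝔅 =>
    sum_card_filter_mem_le_card_add_sq P 𝔅
      (hlines.mono fun L hL => ((Set.Finite.mem_toFinset _).1 (h𝔅 hL)).1)
  have hinc : {I : (Fin 2 → ℝ) × Set (Fin 2 → ℝ) |
      I.1 ∈ (P : Set (Fin 2 → ℝ)) ∧ IsLine I.2 ∧ k ≤ (↑P ∩ I.2).ncard ∧ I.1 ∈ I.2} =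
      {I | I.1 ∈ P ∧ I.2 ∈ {L ∈ 𝔏 | k ≤ #{p ∈ P | p ∈ L}} ∧ I.1 ∈ I.2} := by
    ext ⟨p, L⟩
    simp only [Set.mem_ofPred_eq, mem_coe, mem_filter, hmem k hk, ncard_coe_inter_eq_card_filter]
    tauto
  rw [hinc, ncard_incidences_eq_sum, Set.ncard_coe_finset]
  push_cast
  exact sum_filter_le_of_card_filter_le hC.le hrich hpair hk
end

section
/- Let $S$ be a finite set of points in the plane in which at most $\alpha |S|$ points are collinear for $\alpha = 2/3$ (i.e., $S$ is nondegenerate), with $|S| = n \ge 3$. Then, assuming Beck's theorem, $S$ determines $\Omega(n^3)$ nondegenerate triangles. -/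
/-!
Fix two distinct points `p, q` of `S`. The points of `S` collinear with them all lie on the line
`pq`, so there are at most `2n/3` of them, and at least `n/3` points `r` of `S` make `pqr` a
nondegenerate triangle. Counting pairs (segment, triangle containing it), each of the `n(n-1)/2`
segments lies in at least `n/3` triangles while each triangle contains only three segments, so
there are at least `n²(n-1)/18 ≥ n³/27` triangles.
-/

open Finset

section

open scoped Classical

variable {k V P : Type*} [DivisionRing k] [AddCommGroup V] [Module k V] [AddTorsor V P]

theorem collinear_affineSpan_pair (p q : P) : Collinear k (line[k, p, q] : Set P) := by
  rw [Collinear, ← direction_affineSpan, AffineSubspace.affineSpan_coe, direction_affineSpan]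
  exact collinear_pair k p q

theorem collinear_setOf_collinear_triple {p q : P} (hpq : p ≠ q) :
    Collinear k {x | Collinear k ({p, q, x} : Set P)} :=
  (collinear_affineSpan_pair p q).subset fun _ hx =>
    hx.mem_affineSpan_of_mem_of_ne (by simp) (by simp) (by simp) hpq

variable (k) in
noncomputable def triangles (s : Finset P) : Finset (Finset P) :=
  {t ∈ s.powersetCard 3 | ¬ Collinear k (t : Set P)}

theorem mem_triangles {s t : Finset P} :
    t ∈ triangles k s ↔ t ⊆ s ∧ t.card = 3 ∧ ¬ Collinear k (t : Set P) := by
  simp [triangles, and_assoc]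

theorem ncard_setOf_not_collinear_eq_card_triangles (s : Finset P) :
    {T : Set P | T ⊆ s ∧ T.ncard = 3 ∧ ¬ Collinear k T}.ncard = (triangles k s).card := by
  have h : {T : Set P | T ⊆ s ∧ T.ncard = 3 ∧ ¬ Collinear k T} =
      (↑) '' (triangles k s : Set (Finset P)) := by
    ext T
    simp only [Set.mem_ofPred_eq, Set.mem_image, Finset.mem_coe, mem_triangles]
    constructor
    · rintro ⟨hTs, hT3, hTnc⟩
      lift T to Finset P using s.finite_toSet.subset hTs
      exact ⟨T, ⟨mod_cast hTs, by rwa [Set.ncard_coe_finset] at hT3, hTnc⟩, rfl⟩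
    · rintro ⟨t, ⟨hts, ht3, htnc⟩, rfl⟩
      exact ⟨mod_cast hts, by rwa [Set.ncard_coe_finset], htnc⟩
  rw [h, Set.ncard_image_of_injective _ Finset.coe_injective, Set.ncard_coe_finset]

theorem card_sub_le_card_filter_not_collinear {s : Finset P} {ℓ : ℕ}
    (hℓ : ∀ t ⊆ s, Collinear k (t : Set P) → t.card ≤ ℓ) {p q : P} (hpq : p ≠ q) :
    s.card - ℓ ≤ {r ∈ s | ¬ Collinear k ({p, q, r} : Set P)}.card := by
  have hline : {r ∈ s | Collinear k ({p, q, r} : Set P)}.card ≤ ℓ :=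
    hℓ _ (filter_subset _ _) <| (collinear_setOf_collinear_triple hpq).subset <| by
      intro r hr; simp_all
  have := s.card_filter_add_card_filter_not fun r => Collinear k ({p, q, r} : Set P)
  omega

theorem card_filter_not_collinear_le_card_triangles_superset {s : Finset P} {p q : P}
    (hp : p ∈ s) (hq : q ∈ s) :
    {r ∈ s | ¬ Collinear k ({p, q, r} : Set P)}.card ≤
      {t ∈ triangles k s | {p, q} ⊆ t}.card := by
  refine card_le_card_of_injOn (fun r => {p, q, r}) (fun r hr => ?_) fun r hr r' hr' h => ?_
  · simp only [coe_filter, Set.mem_ofPred_eq] at hr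
    obtain ⟨hrs, hnc⟩ := hr
    simp only [coe_filter, Set.mem_ofPred_eq, mem_triangles]
    refine ⟨⟨?_, ?_, by simpa using hnc⟩, by simp [insert_subset_iff]⟩
    · simp [insert_subset_iff, hp, hq, hrs]
    · exact card_eq_three.2 ⟨p, q, r, ne₁₂_of_not_collinear hnc, ne₁₃_of_not_collinear hnc,
        ne₂₃_of_not_collinear hnc, rfl⟩
  · simp only [coe_filter, Set.mem_ofPred_eq] at hr hr'
    have hr_mem : r ∈ ({p, q, r'} : Finset P) := by
      rw [← show ({p, q, r} : Finset P) = {p, q, r'} from h]; simp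
    simp only [mem_insert, mem_singleton] at hr_mem
    rcases hr_mem with rfl | rfl | rfl
    · exact absurd rfl (ne₁₃_of_not_collinear hr.2)
    · exact absurd rfl (ne₂₃_of_not_collinear hr.2)
    · rfl

theorem choose_two_mul_le_card_triangles_mul_three {s : Finset P} {ℓ : ℕ}
    (hℓ : ∀ t ⊆ s, Collinear k (t : Set P) → t.card ≤ ℓ) :
    s.card.choose 2 * (s.card - ℓ) ≤ (triangles k s).card * 3 := by
  rw [← card_powersetCard]
  refine card_mul_le_card_mul (· ⊆ ·) (fun e he => ?_) fun t ht => ?_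
  · obtain ⟨hes, he2⟩ := mem_powersetCard.1 he
    obtain ⟨p, q, hpq, rfl⟩ := card_eq_two.1 he2
    obtain ⟨hp, hq⟩ : p ∈ s ∧ q ∈ s := by simpa [insert_subset_iff] using hes
    exact (card_sub_le_card_filter_not_collinear hℓ hpq).trans
      (card_filter_not_collinear_le_card_triangles_superset hp hq)
  · calc (bipartiteBelow (· ⊆ ·) (s.powersetCard 2) t).card
        ≤ (t.powersetCard 2).card := card_le_card fun e he => by
          simp only [bipartiteBelow, mem_filter, mem_powersetCard] at he ⊢
          exact ⟨he.2, he.1.2⟩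
      _ = 3 := by rw [card_powersetCard, (mem_triangles.1 ht).2.1]; rfl

end

theorem stmt17_general :
    ∃ c : ℝ, 0 < c ∧
      ∀ (n : ℕ) (S : Set (Fin 2 → ℝ)), S.Finite → S.ncard = n → 3 ≤ n →
        (∀ T : Set (Fin 2 → ℝ), T ⊆ S → Collinear ℝ T →
          (T.ncard : ℝ) ≤ 2 / 3 * n) →
        c * (n : ℝ) ^ 3 ≤
          ({T : Set (Fin 2 → ℝ) | T ⊆ S ∧ T.ncard = 3 ∧
            ¬ Collinear ℝ T}.ncard : ℝ) := by
  refine ⟨1 / 27, by norm_num, fun n S hS hcard hn hcol => ?_⟩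
  lift S to Finset (Fin 2 → ℝ) using hS
  rw [Set.ncard_coe_finset] at hcard
  rw [ncard_setOf_not_collinear_eq_card_triangles]
  have hℓ : ∀ t ⊆ S, Collinear ℝ (t : Set (Fin 2 → ℝ)) → t.card ≤ 2 * n / 3 := by
    intro t hts ht
    have ht_le := hcol t (mod_cast hts) ht
    rw [Set.ncard_coe_finset] at ht_le
    rw [Nat.le_div_iff_mul_le (by norm_num)]
    exact_mod_cast (by linarith : (t.card : ℝ) * 3 ≤ 2 * n)
  have hcount := choose_two_mul_le_card_triangles_mul_three hℓ
  rw [hcard] at hcount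
  have hcount' : (n : ℝ) * (n - 1) / 2 * (n - 2 * n / 3 : ℕ) ≤ (triangles ℝ S).card * 3 := by
    rw [← Nat.cast_choose_two]; exact_mod_cast hcount
  have hthird : (n : ℝ) ≤ 3 * (n - 2 * n / 3 : ℕ) := by
    exact_mod_cast (by omega : n ≤ 3 * (n - 2 * n / 3))
  have hn' : (3 : ℝ) ≤ n := by exact_mod_cast hn
  nlinarith [mul_le_mul_of_nonneg_left hthird (by nlinarith : (0 : ℝ) ≤ n * (n - 1))]

/-- assuming Beck's theorem, a nondegenerate planar set of
`n ≥ 3` points (no more than `(2/3)·n` collinear) determines `Ω(n³)`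
nondegenerate triangles. -/
theorem stmt17 (cB : ℝ) (hcB : 0 < cB)
    (hBeck : ∀ (P : Set (Fin 2 → ℝ)), P.Finite → ∀ ℓ : ℕ,
      (∀ T : Set (Fin 2 → ℝ), T ⊆ P → Collinear ℝ T → T.ncard ≤ ℓ) →
      cB * (P.ncard : ℝ) * ((P.ncard - ℓ : ℕ) : ℝ) ≤
        ({L : Set (Fin 2 → ℝ) | IsLine L ∧ 2 ≤ (P ∩ L).ncard}.ncard : ℝ)) :
    ∃ c : ℝ, 0 < c ∧
      ∀ (n : ℕ) (S : Set (Fin 2 → ℝ)), S.Finite → S.ncard = n → 3 ≤ n →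
        (∀ T : Set (Fin 2 → ℝ), T ⊆ S → Collinear ℝ T →
          (T.ncard : ℝ) ≤ 2 / 3 * n) →
        c * (n : ℝ) ^ 3 ≤
          ({T : Set (Fin 2 → ℝ) | T ⊆ S ∧ T.ncard = 3 ∧
            ¬ Collinear ℝ T}.ncard : ℝ) :=
  stmt17_general
end

section
/- Suppose $d,e$ lie strictly inside the open rectangle $R = (0,x_0) \times (-y_0, y_0) \times \{z_0\} \subset \mathbb{R}^3$ with $de$ parallel to the $x$-axis, and let $a = (0,0,0)$, $c$ be a point in the $xy$-plane at height $y_0$ (i.e., with $|y$-coordinate$| = y_0$). If the segment $d'e'$ on line $de$ has $x$-extent exactly $(0, x_0)$, then $\mathrm{vol}(T(ac, de)) < \mathrm{vol}(T(ac, d'e')) = x_0 y_0 z_0 / 6$. -/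
/-- with `a` the origin and `c` in the `xy`-plane at height `y₀`,
if `d, e` lie strictly inside the open rectangle
`(0,x₀) × (-y₀,y₀) × {z₀}` with `de` parallel to the `x`-axis, and `d', e'` lie
on the line through `de` with `x`-extent exactly `(0, x₀)`, then
`vol(T(ac,de)) < vol(T(ac,d'e')) = x₀ y₀ z₀ / 6`. -/
theorem stmt18 (x0 y0 z0 : ℝ) (hx0 : 0 < x0) (hy0 : 0 < y0) (hz0 : 0 < z0)
    (a c d e d' e' : Fin 3 → ℝ)
    (ha : a = 0) (hc2 : c 2 = 0) (hc1 : |c 1| = y0)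
    (hd0 : d 0 ∈ Set.Ioo 0 x0) (hd1 : d 1 ∈ Set.Ioo (-y0) y0) (hd2 : d 2 = z0)
    (he0 : e 0 ∈ Set.Ioo 0 x0) (he1 : e 1 = d 1) (he2 : e 2 = z0)
    (hd' : d' = ![0, d 1, z0]) (he' : e' = ![x0, d 1, z0]) :
    tetVol a c d e < tetVol a c d' e' ∧ tetVol a c d' e' = x0 * y0 * z0 / 6 := by
  subst ha hd' he' hd2
  have h1 : tetVol 0 c d e = |e 0 - d 0| * y0 * (d 2) / 6 := by
    simp only [tetVol, Matrix.det_fin_three, Matrix.of_apply]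
    simp [Matrix.cons_val_zero, Matrix.cons_val_one, hc2, he1, he2, Matrix.vecHead, Matrix.vecTail]
    rw [show c 0 * d 1 * d 2 - c 0 * d 2 * d 1 - c 1 * d 0 * d 2 +
        c 1 * d 2 * e 0 = (c 1 * d 2) * (e 0 - d 0) by ring]
    rw [abs_mul, abs_mul, hc1, abs_of_pos hz0]
    ring
  have h2 : tetVol 0 c ![0, d 1, d 2] ![x0, d 1, d 2] = x0 * y0 * (d 2) / 6 := by
    simp only [tetVol, Matrix.det_fin_three, Matrix.of_apply]
    simp [Matrix.cons_val_zero, Matrix.cons_val_one, hc2, he1, he2, Matrix.vecHead, Matrix.vecTail]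
    rw [show c 0 * d 1 * d 2 - c 0 * d 2 * d 1 + c 1 * d 2 * x0 =
        (c 1 * d 2) * x0 by ring]
    rw [abs_mul, abs_mul, hc1, abs_of_pos hz0, abs_of_pos hx0]
    ring
  rw [h1, h2]
  constructor
  · have hlt : |e 0 - d 0| < x0 := by
      rw [abs_sub_lt_iff]
      constructor <;> nlinarith [hd0.1, hd0.2, he0.1, he0.2]
    nlinarith [abs_nonneg (e 0 - d 0), mul_pos hy0 hz0]
  · ring
end
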